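/- arXiv:2505.07599 — 3 statements merged into one kernel-verified Lean document; each statement's English description precedes it below -/
import Mathlib

section
/- Let G₊ be obtained from a grid diagram G₋ by an O swap, and let ℓ₊ and ℓ₋ be their numbers of components (so ℓ₊ − ℓ₋ = ±1). Then there exists an 𝔽₂[v]-linear chain map 𝒫_{O,big} : fG̃C_big(G₊) → fG̃C_big(G₋) (commuting with the differentials ∂̃_{O,big}) which is homogeneous of Maslov degree −1, satisfies 𝒫_{O,big}(F_j) ⊆ F_{j − (ℓ₊ − ℓ₋ + 1)/2} for every j, and satisfies 𝒫_{O,big}(x⁺(G₊)) = x⁺(G₋) and 𝒫_{O,big}(x⁻(G₊)) = x⁻(G₋). -/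
open Finset

noncomputable section

/-- A grid diagram of size `n`: a pair of permutations `σO`, `σX` of `{0,…,n-1}`
with `σO i ≠ σX i` for all `i`.  The `O` markings are the points
`(i + 1/2, σO i + 1/2)` and the `X` markings are the points `(i + 1/2, σX i + 1/2)`
in the torus `ℝ²/nℤ²`. -/
structure GridDiagram (n : ℕ) where
  σO : Equiv.Perm (Fin n)
  σX : Equiv.Perm (Fin n)
  hne : ∀ i, σO i ≠ σX i

namespace Grid

variable {n : ℕ}

/-! ### Rectangles -/

/-- Membership in the cyclic interval `[a, c)` in `ℤ/n` (on values). -/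
def inCyc (a c t : ℕ) : Prop :=
  (a < c ∧ a ≤ t ∧ t < c) ∨ (c ≤ a ∧ (a ≤ t ∨ t < c))

instance (a c t : ℕ) : Decidable (inCyc a c t) := by unfold inCyc; infer_instance

/-- The rectangle `r(x,i,j)` (for `i ≠ j`), going from the grid state `x` to the grid
state `x ∘ (i j)`, with its lower-left and upper-right corners at points of `x`,
contains the square `(k, h)`. -/
def rectSq (x : Equiv.Perm (Fin n)) (i j : Fin n) (k h : Fin n) : Prop :=
  inCyc i.1 j.1 k.1 ∧ inCyc (x i).1 (x j).1 h.1

instance (x : Equiv.Perm (Fin n)) (i j k h : Fin n) : Decidable (rectSq x i j k h) := by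
  unfold rectSq; infer_instance

/-- The rectangle `r(x,i,j)` contains the `O` marking of column `k`. -/
def rectO (G : GridDiagram n) (x : Equiv.Perm (Fin n)) (i j k : Fin n) : Prop :=
  rectSq x i j k (G.σO k)

instance (G : GridDiagram n) (x : Equiv.Perm (Fin n)) (i j k : Fin n) :
    Decidable (rectO G x i j k) := by unfold rectO; infer_instance

/-- The rectangle `r(x,i,j)` contains the `X` marking of column `k`. -/
def rectX (G : GridDiagram n) (x : Equiv.Perm (Fin n)) (i j k : Fin n) : Prop :=
  rectSq x i j k (G.σX k)

instance (G : GridDiagram n) (x : Equiv.Perm (Fin n)) (i j k : Fin n) :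
    Decidable (rectX G x i j k) := by unfold rectX; infer_instance

/-- `#(Int(r) ∩ x)` for the rectangle `r = r(x,i,j)`. -/
def intCount (x : Equiv.Perm (Fin n)) (i j : Fin n) : ℕ :=
  (univ.filter fun a : Fin n =>
    a ≠ i ∧ inCyc i.1 j.1 a.1 ∧ x a ≠ x i ∧ inCyc (x i).1 (x j).1 (x a).1).card

/-! ### Maslov and Alexander gradings -/

/-- The planar point set of a grid state (in the fundamental domain `[0,n) × [0,n)`). -/
def ptsSt (x : Equiv.Perm (Fin n)) : Finset (ℚ × ℚ) :=
  univ.image fun i : Fin n => ((i.1 : ℚ), ((x i).1 : ℚ))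

/-- The planar point set of the `O` markings. -/
def ptsO (G : GridDiagram n) : Finset (ℚ × ℚ) :=
  univ.image fun i : Fin n => ((i.1 : ℚ) + 1/2, ((G.σO i).1 : ℚ) + 1/2)

/-- The planar point set of the `X` markings. -/
def ptsX (G : GridDiagram n) : Finset (ℚ × ℚ) :=
  univ.image fun i : Fin n => ((i.1 : ℚ) + 1/2, ((G.σX i).1 : ℚ) + 1/2)

/-- `I(P,Q)`: the number of pairs `(p,q)` with `p` strictly below and strictly to the
left of `q`. -/
def Icnt (P Q : Finset (ℚ × ℚ)) : ℕ :=
  ((P ×ˢ Q).filter fun pq => pq.1.1 < pq.2.1 ∧ pq.1.2 < pq.2.2).card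

/-- `J(P,Q) = (I(P,Q) + I(Q,P))/2`. -/
def Jfun (P Q : Finset (ℚ × ℚ)) : ℚ := ((Icnt P Q : ℚ) + (Icnt Q P : ℚ)) / 2

/-- `M_O(x) = J(x,x) - 2J(x,O) + J(O,O) + 1`. -/
def MO (G : GridDiagram n) (x : Equiv.Perm (Fin n)) : ℚ :=
  Jfun (ptsSt x) (ptsSt x) - 2 * Jfun (ptsSt x) (ptsO G) + Jfun (ptsO G) (ptsO G) + 1

/-- `M_X(x) = J(x,x) - 2J(x,X) + J(X,X) + 1`. -/
def MXgr (G : GridDiagram n) (x : Equiv.Perm (Fin n)) : ℚ :=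
  Jfun (ptsSt x) (ptsSt x) - 2 * Jfun (ptsSt x) (ptsX G) + Jfun (ptsX G) (ptsX G) + 1

/-- The Maslov grading of a grid state. -/
def Mgr (G : GridDiagram n) (x : Equiv.Perm (Fin n)) : ℚ := MO G x

/-- The number of components of the link of `G`: the number of cycles of `σO⁻¹ ∘ σX`. -/
def ncomp (G : GridDiagram n) : ℕ := (G.σO⁻¹ * G.σX).cycleType.card

/-- The Alexander grading of a grid state. -/
def Agr (G : GridDiagram n) (x : Equiv.Perm (Fin n)) : ℚ :=
  (MO G x - MXgr G x) / 2 - ((n : ℚ) - (ncomp G : ℚ)) / 2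

/-- A system of representatives, one per link component: `κ` picks exactly one column
index in each cycle of `σO⁻¹ ∘ σX`. -/
def CompReps (G : GridDiagram n) {ℓ : ℕ} (κ : Fin ℓ → Fin n) : Prop :=
  (∀ i j, (G.σO⁻¹ * G.σX).SameCycle (κ i) (κ j) → i = j) ∧
  (∀ t, ∃ i, (G.σO⁻¹ * G.σX).SameCycle (κ i) t)

/-! ### Canonical grid states -/

/-- The canonical grid state `x⁻(G) : i ↦ σX i`. -/
def xm (G : GridDiagram n) : Equiv.Perm (Fin n) := G.σX

/-- The canonical grid state `x⁺(G) : i+1 ↦ σX i + 1` (cyclically). -/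
def xp (G : GridDiagram n) : Equiv.Perm (Fin n) :=
  finRotate n * G.σX * (finRotate n)⁻¹

/-! ### The unblocked double-point enhanced grid complex -/

/-- The ground ring `𝔽₂[V₁,…,V_n,v]`; `some k` indexes `V_k` and `none` indexes `v`. -/
abbrev Rng (n : ℕ) := MvPolynomial (Option (Fin n)) (ZMod 2)

/-- The variable `V_k`. -/
def Vv (k : Fin n) : Rng n := MvPolynomial.X (some k)

/-- The double-point variable `v`. -/
def vv (n : ℕ) : Rng n := MvPolynomial.X none

/-- The unblocked double-point enhanced grid complex `GC⁻_big(G)`: the free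
`𝔽₂[V₁,…,V_n,v]`-module on the set of grid states. -/
abbrev GCm (n : ℕ) := Equiv.Perm (Fin n) → Rng n

open scoped Classical in
/-- The basis element of `GC⁻_big(G)` corresponding to a grid state. -/
def basM (x : Equiv.Perm (Fin n)) : GCm n := fun y => if y = x then 1 else 0

/-- `V₁^{O₁(r)} ⋯ V_n^{O_n(r)} · v^{#(Int(r)∩x)}` for the rectangle `r = r(x,i,j)`. -/
def rectMon (G : GridDiagram n) (x : Equiv.Perm (Fin n)) (i j : Fin n) : Rng n :=
  (∏ k : Fin n, if rectO G x i j k then Vv k else 1) * vv n ^ intCount x i j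

/-- The value of the differential `∂⁻_{X,big}` on a grid state. -/
def DxM (G : GridDiagram n) (x : Equiv.Perm (Fin n)) : GCm n :=
  ∑ i : Fin n, ∑ j : Fin n,
    if i ≠ j ∧ ∀ k, ¬ rectX G x i j k then
      rectMon G x i j • basM (x * Equiv.swap i j) else 0

/-- The differential `∂⁻_{X,big}` of the unblocked double-point enhanced grid
complex. -/
def dM (G : GridDiagram n) : GCm n →ₗ[Rng n] GCm n where
  toFun z := ∑ x : Equiv.Perm (Fin n), z x • DxM G x
  map_add' a b := by
    simp only [Pi.add_apply, add_smul]
    exact Finset.sum_add_distrib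
  map_smul' c a := by
    simp only [Pi.smul_apply, smul_eq_mul, RingHom.id_apply, Finset.smul_sum, smul_smul]

/-- The cycles of the unblocked complex. -/
def cyclesM (G : GridDiagram n) : Submodule (Rng n) (GCm n) := LinearMap.ker (dM G)

/-- The boundaries (as a submodule of the cycles) of the unblocked complex. -/
def bdriesM (G : GridDiagram n) : Submodule (Rng n) (cyclesM G) :=
  (LinearMap.range (dM G)).comap (cyclesM G).subtype

/-- The unblocked double-point enhanced grid homology `GH⁻_big(G)`. -/
abbrev GHm (G : GridDiagram n) := cyclesM G ⧸ bdriesM G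

open scoped Classical in
/-- The homology class of a cycle (defined as `0` on non-cycles). -/
def hclsM (G : GridDiagram n) (z : GCm n) : GHm G :=
  if h : z ∈ cyclesM G then Submodule.Quotient.mk (⟨z, h⟩ : cyclesM G) else 0

/-- The class `λ⁻_big(G)` of `x⁻(G)` in `GH⁻_big(G)`. -/
def lamMm (G : GridDiagram n) : GHm G := hclsM G (basM (xm G))

/-- The class `λ⁺_big(G)` of `x⁺(G)` in `GH⁻_big(G)`. -/
def lamPm (G : GridDiagram n) : GHm G := hclsM G (basM (xp G))

/-- The Maslov degree of the monomial `d` on the basis element `x`. -/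
def monM (G : GridDiagram n) (x : Equiv.Perm (Fin n)) (d : (Option (Fin n)) →₀ ℕ) : ℚ :=
  Mgr G x + 2 * (d none : ℚ) - 2 * ∑ k : Fin n, (d (some k) : ℚ)

/-- The Alexander degree of the monomial `d` on the basis element `x`. -/
def monA (G : GridDiagram n) (x : Equiv.Perm (Fin n)) (d : (Option (Fin n)) →₀ ℕ) : ℚ :=
  Agr G x - ∑ k : Fin n, (d (some k) : ℚ)

/-- Homogeneity of bidegree `(m,a)` in the unblocked complex. -/
def IsHomogM (G : GridDiagram n) (m a : ℚ) (z : GCm n) : Prop :=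
  ∀ x, ∀ d ∈ (z x).support, monM G x d = m ∧ monA G x d = a

/-- The bigraded piece of `GH⁻_big(G)` in bidegree `(m,a)`: classes of homogeneous
cycles. -/
def hPieceM (G : GridDiagram n) (m a : ℚ) : Set (GHm G) :=
  {h | ∃ z, IsHomogM G m a z ∧ hclsM G z = h}

/-! ### The simply blocked quotient complex -/

/-- The submodule `(V_{k₁},…,V_{k_ℓ})·GC⁻_big(G)`. -/
def hatSub (G : GridDiagram n) {ℓ : ℕ} (κ : Fin ℓ → Fin n) : Submodule (Rng n) (GCm n) :=
  (Ideal.span (Set.range fun i => Vv (κ i))) • (⊤ : Submodule (Rng n) (GCm n))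

lemma hat_stable (G : GridDiagram n) {ℓ : ℕ} (κ : Fin ℓ → Fin n) :
    hatSub G κ ≤ (hatSub G κ).comap (dM G) := by
  rw [← Submodule.map_le_iff_le_comap]
  unfold hatSub
  rw [Submodule.map_smul'']
  exact Submodule.smul_mono le_rfl le_top

/-- The simply blocked double-point enhanced grid complex `ĜC_big(G)`. -/
abbrev GCh (G : GridDiagram n) {ℓ : ℕ} (κ : Fin ℓ → Fin n) := GCm n ⧸ hatSub G κ

/-- The differential induced by `∂⁻_{X,big}` on `ĜC_big(G)`. -/
def dH (G : GridDiagram n) {ℓ : ℕ} (κ : Fin ℓ → Fin n) : GCh G κ →ₗ[Rng n] GCh G κ :=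
  Submodule.mapQ _ _ (dM G) (hat_stable G κ)

def cyclesH (G : GridDiagram n) {ℓ : ℕ} (κ : Fin ℓ → Fin n) : Submodule (Rng n) (GCh G κ) :=
  LinearMap.ker (dH G κ)

def bdriesH (G : GridDiagram n) {ℓ : ℕ} (κ : Fin ℓ → Fin n) :
    Submodule (Rng n) (cyclesH G κ) :=
  (LinearMap.range (dH G κ)).comap (cyclesH G κ).subtype

/-- The simply blocked double-point enhanced grid homology `ĜH_big(G)`. -/
abbrev GHh (G : GridDiagram n) {ℓ : ℕ} (κ : Fin ℓ → Fin n) := cyclesH G κ ⧸ bdriesH G κ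

open scoped Classical in
/-- The homology class in `ĜH_big(G)` of (the image of) an element of `GC⁻_big(G)`. -/
def hclsH (G : GridDiagram n) {ℓ : ℕ} (κ : Fin ℓ → Fin n) (z : GCm n) : GHh G κ :=
  if h : (hatSub G κ).mkQ z ∈ cyclesH G κ then
    Submodule.Quotient.mk (⟨(hatSub G κ).mkQ z, h⟩ : cyclesH G κ) else 0

/-- The class `λ̂⁺_big(G)`. -/
def lamPh (G : GridDiagram n) {ℓ : ℕ} (κ : Fin ℓ → Fin n) : GHh G κ :=
  hclsH G κ (basM (xp G))

/-- The class `λ̂⁻_big(G)`. -/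
def lamMh (G : GridDiagram n) {ℓ : ℕ} (κ : Fin ℓ → Fin n) : GHh G κ :=
  hclsH G κ (basM (xm G))

/-- The bigraded piece of `ĜH_big(G)` in bidegree `(m,a)`: classes of (images of)
homogeneous elements. -/
def hPieceH (G : GridDiagram n) {ℓ : ℕ} (κ : Fin ℓ → Fin n) (m a : ℚ) : Set (GHh G κ) :=
  {h | ∃ z, IsHomogM G m a z ∧ hclsH G κ z = h}

/-! ### The fully blocked double-point enhanced grid complex -/

/-- The ground ring `𝔽₂[v]` of the fully blocked theory. -/
abbrev Pv := Polynomial (ZMod 2)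

/-- The fully blocked double-point enhanced grid complex: the free `𝔽₂[v]`-module on
the set of grid states.  (The same underlying module, with a different differential,
is the filtered double-point enhanced grid complex `fG̃C_big(G)`.) -/
abbrev GCt (n : ℕ) := Equiv.Perm (Fin n) → Pv

open scoped Classical in
/-- The basis element of `G̃C_big(G)` corresponding to a grid state. -/
def basT (x : Equiv.Perm (Fin n)) : GCt n := fun y => if y = x then 1 else 0

/-- The value of the fully blocked differential `∂̃_{OX,big}` on a grid state. -/
def DxT (G : GridDiagram n) (x : Equiv.Perm (Fin n)) : GCt n :=
  ∑ i : Fin n, ∑ j : Fin n,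
    if i ≠ j ∧ (∀ k, ¬ rectX G x i j k) ∧ (∀ k, ¬ rectO G x i j k) then
      ((Polynomial.X : Pv) ^ intCount x i j) • basT (x * Equiv.swap i j) else 0

/-- The fully blocked differential `∂̃_{OX,big}`. -/
def dT (G : GridDiagram n) : GCt n →ₗ[Pv] GCt n where
  toFun z := ∑ x : Equiv.Perm (Fin n), z x • DxT G x
  map_add' a b := by
    simp only [Pi.add_apply, add_smul]
    exact Finset.sum_add_distrib
  map_smul' c a := by
    simp only [Pi.smul_apply, smul_eq_mul, RingHom.id_apply, Finset.smul_sum, smul_smul]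

def cyclesT (G : GridDiagram n) : Submodule Pv (GCt n) := LinearMap.ker (dT G)

def bdriesT (G : GridDiagram n) : Submodule Pv (cyclesT G) :=
  (LinearMap.range (dT G)).comap (cyclesT G).subtype

/-- The fully blocked double-point enhanced grid homology `G̃H_big(G)`. -/
abbrev GHt (G : GridDiagram n) := cyclesT G ⧸ bdriesT G

open scoped Classical in
/-- The homology class of a cycle in `G̃H_big(G)` (defined as `0` on non-cycles). -/
def hclsT (G : GridDiagram n) (z : GCt n) : GHt G :=
  if h : z ∈ cyclesT G then Submodule.Quotient.mk (⟨z, h⟩ : cyclesT G) else 0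

/-- The class `λ̃⁺_big(G)`. -/
def lamPt (G : GridDiagram n) : GHt G := hclsT G (basT (xp G))

/-- The class `λ̃⁻_big(G)`. -/
def lamMt (G : GridDiagram n) : GHt G := hclsT G (basT (xm G))

/-- Homogeneity of bidegree `(m,a)` in the fully blocked complex. -/
def IsHomogT (G : GridDiagram n) (m a : ℚ) (z : GCt n) : Prop :=
  ∀ x, ∀ k ∈ (z x).support, Mgr G x + 2 * (k : ℚ) = m ∧ Agr G x = a

/-- The bigraded piece of `G̃H_big(G)` in bidegree `(m,a)`. -/
def hPieceT (G : GridDiagram n) (m a : ℚ) : Set (GHt G) :=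
  {h | ∃ z, IsHomogT G m a z ∧ hclsT G z = h}

/-! ### The filtered double-point enhanced grid complex -/

/-- The value of the filtered differential `∂̃_{O,big}` on a grid state. -/
def DxF (G : GridDiagram n) (x : Equiv.Perm (Fin n)) : GCt n :=
  ∑ i : Fin n, ∑ j : Fin n,
    if i ≠ j ∧ (∀ k, ¬ rectO G x i j k) then
      ((Polynomial.X : Pv) ^ intCount x i j) • basT (x * Equiv.swap i j) else 0

/-- The differential `∂̃_{O,big}` of the filtered double-point enhanced grid complex
`fG̃C_big(G)`. -/
def dF (G : GridDiagram n) : GCt n →ₗ[Pv] GCt n where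
  toFun z := ∑ x : Equiv.Perm (Fin n), z x • DxF G x
  map_add' a b := by
    simp only [Pi.add_apply, add_smul]
    exact Finset.sum_add_distrib
  map_smul' c a := by
    simp only [Pi.smul_apply, smul_eq_mul, RingHom.id_apply, Finset.smul_sum, smul_smul]

/-- Membership in the Alexander filtration level `F_j` of `fG̃C_big(G)`. -/
def inF (G : GridDiagram n) (j : ℚ) (z : GCt n) : Prop :=
  ∀ x, z x ≠ 0 → Agr G x ≤ j

/-- Maslov-homogeneity of degree `m` in `fG̃C_big(G)` (where `v` has degree `2`). -/
def IsMhomogF (G : GridDiagram n) (m : ℚ) (z : GCt n) : Prop :=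
  ∀ x, ∀ k ∈ (z x).support, Mgr G x + 2 * (k : ℚ) = m

/-! ### The ordinary (non-enhanced) grid complex -/

/-- The ground ring `𝔽₂[V₁,…,V_n]` of the ordinary grid complex. -/
abbrev Rng0 (n : ℕ) := MvPolynomial (Fin n) (ZMod 2)

/-- The ordinary unblocked grid complex `GC⁻(G)`. -/
abbrev GC0 (n : ℕ) := Equiv.Perm (Fin n) → Rng0 n

open scoped Classical in
/-- The basis element of `GC⁻(G)` corresponding to a grid state. -/
def bas0 (x : Equiv.Perm (Fin n)) : GC0 n := fun y => if y = x then 1 else 0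

/-- `V₁^{O₁(r)} ⋯ V_n^{O_n(r)}` for the rectangle `r = r(x,i,j)`. -/
def rectMon0 (G : GridDiagram n) (x : Equiv.Perm (Fin n)) (i j : Fin n) : Rng0 n :=
  ∏ k : Fin n, if rectO G x i j k then MvPolynomial.X k else 1

/-- The value of the ordinary differential `∂⁻_X` on a grid state: only empty
rectangles are counted. -/
def Dx0 (G : GridDiagram n) (x : Equiv.Perm (Fin n)) : GC0 n :=
  ∑ i : Fin n, ∑ j : Fin n,
    if i ≠ j ∧ (∀ k, ¬ rectX G x i j k) ∧ intCount x i j = 0 then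
      rectMon0 G x i j • bas0 (x * Equiv.swap i j) else 0

/-- The ordinary differential `∂⁻_X`. -/
def d0 (G : GridDiagram n) : GC0 n →ₗ[Rng0 n] GC0 n where
  toFun z := ∑ x : Equiv.Perm (Fin n), z x • Dx0 G x
  map_add' a b := by
    simp only [Pi.add_apply, add_smul]
    exact Finset.sum_add_distrib
  map_smul' c a := by
    simp only [Pi.smul_apply, smul_eq_mul, RingHom.id_apply, Finset.smul_sum, smul_smul]

/-- The submodule `(V_{k₁},…,V_{k_ℓ})·GC⁻(G)`. -/
def hatSub0 (G : GridDiagram n) {ℓ : ℕ} (κ : Fin ℓ → Fin n) : Submodule (Rng0 n) (GC0 n) :=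
  (Ideal.span (Set.range fun i => (MvPolynomial.X (κ i) : Rng0 n))) •
    (⊤ : Submodule (Rng0 n) (GC0 n))

lemma hat0_stable (G : GridDiagram n) {ℓ : ℕ} (κ : Fin ℓ → Fin n) :
    hatSub0 G κ ≤ (hatSub0 G κ).comap (d0 G) := by
  rw [← Submodule.map_le_iff_le_comap]
  unfold hatSub0
  rw [Submodule.map_smul'']
  exact Submodule.smul_mono le_rfl le_top

/-- The ordinary simply blocked grid complex `ĜC(G)`. -/
abbrev GCh0 (G : GridDiagram n) {ℓ : ℕ} (κ : Fin ℓ → Fin n) := GC0 n ⧸ hatSub0 G κ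

/-- The ordinary differential induced on `ĜC(G)`. -/
def dH0 (G : GridDiagram n) {ℓ : ℕ} (κ : Fin ℓ → Fin n) : GCh0 G κ →ₗ[Rng0 n] GCh0 G κ :=
  Submodule.mapQ _ _ (d0 G) (hat0_stable G κ)

def cyclesH0 (G : GridDiagram n) {ℓ : ℕ} (κ : Fin ℓ → Fin n) :
    Submodule (Rng0 n) (GCh0 G κ) :=
  LinearMap.ker (dH0 G κ)

def bdriesH0 (G : GridDiagram n) {ℓ : ℕ} (κ : Fin ℓ → Fin n) :
    Submodule (Rng0 n) (cyclesH0 G κ) :=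
  (LinearMap.range (dH0 G κ)).comap (cyclesH0 G κ).subtype

/-- The ordinary simply blocked grid homology `ĜH(G)`. -/
abbrev GHh0 (G : GridDiagram n) {ℓ : ℕ} (κ : Fin ℓ → Fin n) := cyclesH0 G κ ⧸ bdriesH0 G κ

open scoped Classical in
/-- The homology class in `ĜH(G)` of (the image of) an element of `GC⁻(G)`. -/
def hclsH0 (G : GridDiagram n) {ℓ : ℕ} (κ : Fin ℓ → Fin n) (z : GC0 n) : GHh0 G κ :=
  if h : (hatSub0 G κ).mkQ z ∈ cyclesH0 G κ then
    Submodule.Quotient.mk (⟨(hatSub0 G κ).mkQ z, h⟩ : cyclesH0 G κ) else 0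

/-- The ordinary class `λ̂⁺(G)`. -/
def lamPh0 (G : GridDiagram n) {ℓ : ℕ} (κ : Fin ℓ → Fin n) : GHh0 G κ :=
  hclsH0 G κ (bas0 (xp G))

/-- The ordinary class `λ̂⁻(G)`. -/
def lamMh0 (G : GridDiagram n) {ℓ : ℕ} (κ : Fin ℓ → Fin n) : GHh0 G κ :=
  hclsH0 G κ (bas0 (xm G))

/-! ### Elementary moves on grid diagrams -/

/-- A cyclic permutation of the columns or of the rows (by one step, in either
direction). -/
def CyclicMove (G G' : GridDiagram n) : Prop :=
  ∃ ρ : Equiv.Perm (Fin n), (ρ = finRotate n ∨ ρ = (finRotate n)⁻¹) ∧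
    ((G'.σO = G.σO * ρ ∧ G'.σX = G.σX * ρ) ∨ (G'.σO = ρ * G.σO ∧ G'.σX = ρ * G.σX))

/-- The closed intervals `[min a b, max a b]` and `[min c d, max c d]` are disjoint or
nested. -/
def spanOK (a b c d : ℕ) : Prop :=
  max a b < min c d ∨ max c d < min a b ∨
  (min a b < min c d ∧ max c d < max a b) ∨ (min c d < min a b ∧ max a b < max c d)

/-- A commutation of two adjacent columns or rows whose marking intervals are nested or
disjoint. -/
def Commutation (G G' : GridDiagram n) : Prop :=
  (∃ i : Fin n,
    spanOK (G.σO i).1 (G.σX i).1 (G.σO (finRotate n i)).1 (G.σX (finRotate n i)).1 ∧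
    G'.σO = G.σO * Equiv.swap i (finRotate n i) ∧
    G'.σX = G.σX * Equiv.swap i (finRotate n i)) ∨
  (∃ j : Fin n,
    spanOK (G.σO⁻¹ j).1 (G.σX⁻¹ j).1 (G.σO⁻¹ (finRotate n j)).1 (G.σX⁻¹ (finRotate n j)).1 ∧
    G'.σO = Equiv.swap j (finRotate n j) * G.σO ∧
    G'.σX = Equiv.swap j (finRotate n j) * G.σX)

/-- Re-indexing of the old columns after splitting column `i` into two. -/
def cmap (i j : Fin n) : Fin (n + 1) :=
  if j.1 < i.1 then j.castSucc else j.succ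

/-- Re-indexing of the old rows after splitting row `r` into two. -/
def rmap (r s : Fin n) : Fin (n + 1) :=
  if s.1 < r.1 then s.castSucc else s.succ

/-- Stabilization of type `X:SE` at the `X` marking in column `i` (with `r = σX i`):
in the new `2×2` block the `X`s are at `(i, r)` and `(i+1, r+1)`, the new `O` is at
`(i, r+1)`, and the southeast square of the block is empty. -/
def StabXSEat (G : GridDiagram n) (G' : GridDiagram (n + 1)) (i : Fin n) : Prop :=
  ∃ r : Fin n, r = G.σX i ∧
    G'.σX i.castSucc = r.castSucc ∧
    G'.σX i.succ = r.succ ∧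
    G'.σO i.castSucc = r.succ ∧
    G'.σO i.succ = rmap r (G.σO i) ∧
    (∀ j, j ≠ i → G'.σX (cmap i j) = rmap r (G.σX j)) ∧
    (∀ j, j ≠ i → G'.σO (cmap i j) =
      if G.σO j = r then r.castSucc else rmap r (G.σO j))

/-- Stabilization of type `X:NW` at the `X` marking in column `i`. -/
def StabXNWat (G : GridDiagram n) (G' : GridDiagram (n + 1)) (i : Fin n) : Prop :=
  ∃ r : Fin n, r = G.σX i ∧
    G'.σX i.castSucc = r.castSucc ∧
    G'.σX i.succ = r.succ ∧
    G'.σO i.succ = r.castSucc ∧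
    G'.σO i.castSucc = rmap r (G.σO i) ∧
    (∀ j, j ≠ i → G'.σX (cmap i j) = rmap r (G.σX j)) ∧
    (∀ j, j ≠ i → G'.σO (cmap i j) =
      if G.σO j = r then r.succ else rmap r (G.σO j))

/-- Stabilization of type `X:SW` at the `X` marking in column `i`. -/
def StabXSWat (G : GridDiagram n) (G' : GridDiagram (n + 1)) (i : Fin n) : Prop :=
  ∃ r : Fin n, r = G.σX i ∧
    G'.σX i.castSucc = r.succ ∧
    G'.σX i.succ = r.castSucc ∧
    G'.σO i.succ = r.succ ∧
    G'.σO i.castSucc = rmap r (G.σO i) ∧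
    (∀ j, j ≠ i → G'.σX (cmap i j) = rmap r (G.σX j)) ∧
    (∀ j, j ≠ i → G'.σO (cmap i j) =
      if G.σO j = r then r.castSucc else rmap r (G.σO j))

/-- Stabilization of type `X:NE` at the `X` marking in column `i`. -/
def StabXNEat (G : GridDiagram n) (G' : GridDiagram (n + 1)) (i : Fin n) : Prop :=
  ∃ r : Fin n, r = G.σX i ∧
    G'.σX i.castSucc = r.succ ∧
    G'.σX i.succ = r.castSucc ∧
    G'.σO i.castSucc = r.castSucc ∧
    G'.σO i.succ = rmap r (G.σO i) ∧
    (∀ j, j ≠ i → G'.σX (cmap i j) = rmap r (G.σX j)) ∧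
    (∀ j, j ≠ i → G'.σO (cmap i j) =
      if G.σO j = r then r.succ else rmap r (G.σO j))

/-- `G₊` is obtained from `G₋` by an `X` swap (the grid form of a pinch move):
the two diagrams coincide except in two adjacent rows, where `G₋` has, in four columns
`c₁ < c₂ < c₃ < c₄` with `c₂`, `c₃` separated by at least two vertical lines, an `O`
in the upper row at `c₁`, an `X` in the upper row at `c₂`, an `X` in the lower row at
`c₃` and an `O` in the lower row at `c₄`, and `G₊` has the two `X`s swapped between the
two rows. -/
def XSwap (Gm Gp : GridDiagram n) : Prop :=
  ∃ (u : Fin n) (h : u.1 + 1 < n) (c1 c2 c3 c4 : Fin n),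
    c1.1 < c2.1 ∧ c2.1 + 2 ≤ c3.1 ∧ c3.1 < c4.1 ∧
    Gm.σO c1 = ⟨u.1 + 1, h⟩ ∧ Gm.σX c2 = ⟨u.1 + 1, h⟩ ∧
    Gm.σX c3 = u ∧ Gm.σO c4 = u ∧
    Gp.σO = Gm.σO ∧ Gp.σX = Equiv.swap u ⟨u.1 + 1, h⟩ * Gm.σX

/-- `G₊` is obtained from `G₋` by an `O` swap (the grid form of a pinch move). -/
def OSwap (Gm Gp : GridDiagram n) : Prop :=
  ∃ (u : Fin n) (h : u.1 + 1 < n) (c1 c2 c3 c4 : Fin n),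
    c1.1 < c2.1 ∧ c2.1 + 2 ≤ c3.1 ∧ c3.1 < c4.1 ∧
    Gm.σX c1 = ⟨u.1 + 1, h⟩ ∧ Gm.σO c2 = ⟨u.1 + 1, h⟩ ∧
    Gm.σO c3 = u ∧ Gm.σX c4 = u ∧
    Gp.σX = Gm.σX ∧ Gp.σO = Equiv.swap u ⟨u.1 + 1, h⟩ * Gm.σO

/-- Re-indexing of the old columns after a birth inserting two new columns immediately
to the right of column `i`. -/
def cbir (i j : Fin n) : Fin (n + 2) :=
  if j.1 ≤ i.1 then ⟨j.1, by have := j.isLt; omega⟩ else ⟨j.1 + 2, by have := j.isLt; omega⟩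

/-- Re-indexing of the old rows after a birth inserting two new rows immediately below
row `s`. -/
def rbir (s t : Fin n) : Fin (n + 2) :=
  if t.1 < s.1 then ⟨t.1, by have := t.isLt; omega⟩ else ⟨t.1 + 2, by have := t.isLt; omega⟩

/-- `G₊` is obtained from `G₋` by a birth move at the `O` marking of column `i`:
two new columns are inserted immediately to the right of column `i` and two new rows
immediately below row `s = σO i`, and the new `2×2` block of squares directly southeast
of the chosen `O` marking is filled with `O`s in its top-left and bottom-right squares
and `X`s in its top-right and bottom-left squares. -/
def Birth (Gm : GridDiagram n) (Gp : GridDiagram (n + 2)) : Prop :=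
  ∃ (i s : Fin n), s = Gm.σO i ∧
    (∀ j, Gp.σO (cbir i j) = rbir s (Gm.σO j)) ∧
    (∀ j, Gp.σX (cbir i j) = rbir s (Gm.σX j)) ∧
    Gp.σO ⟨i.1 + 1, by have := i.isLt; omega⟩ = ⟨s.1 + 1, by have := s.isLt; omega⟩ ∧
    Gp.σO ⟨i.1 + 2, by have := i.isLt; omega⟩ = ⟨s.1, by have := s.isLt; omega⟩ ∧
    Gp.σX ⟨i.1 + 1, by have := i.isLt; omega⟩ = ⟨s.1, by have := s.isLt; omega⟩ ∧
    Gp.σX ⟨i.1 + 2, by have := i.isLt; omega⟩ = ⟨s.1 + 1, by have := s.isLt; omega⟩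

/-- Grid diagrams of arbitrary size. -/
def GD : Type := Σ n, GridDiagram n

/-- Elementary grid moves that preserve the Legendrian link type: cyclic permutations,
commutations, and (de)stabilizations of types `X:SE` and `X:NW`. -/
inductive LegMove : GD → GD → Prop
  | cyc {n : ℕ} {G G' : GridDiagram n} : CyclicMove G G' → LegMove ⟨n, G⟩ ⟨n, G'⟩
  | comm {n : ℕ} {G G' : GridDiagram n} : Commutation G G' → LegMove ⟨n, G⟩ ⟨n, G'⟩
  | stabSE {n : ℕ} {G : GridDiagram n} {G' : GridDiagram (n + 1)} :
      (∃ i, StabXSEat G G' i) → LegMove ⟨n, G⟩ ⟨n + 1, G'⟩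
  | destabSE {n : ℕ} {G : GridDiagram n} {G' : GridDiagram (n + 1)} :
      (∃ i, StabXSEat G G' i) → LegMove ⟨n + 1, G'⟩ ⟨n, G⟩
  | stabNW {n : ℕ} {G : GridDiagram n} {G' : GridDiagram (n + 1)} :
      (∃ i, StabXNWat G G' i) → LegMove ⟨n, G⟩ ⟨n + 1, G'⟩
  | destabNW {n : ℕ} {G : GridDiagram n} {G' : GridDiagram (n + 1)} :
      (∃ i, StabXNWat G G' i) → LegMove ⟨n + 1, G'⟩ ⟨n, G⟩

/-- Elementary grid moves that preserve the transverse link type: additionally,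
(de)stabilizations of type `X:SW`. -/
inductive TransMove : GD → GD → Prop
  | leg {g g' : GD} : LegMove g g' → TransMove g g'
  | stabSW {n : ℕ} {G : GridDiagram n} {G' : GridDiagram (n + 1)} :
      (∃ i, StabXSWat G G' i) → TransMove ⟨n, G⟩ ⟨n + 1, G'⟩
  | destabSW {n : ℕ} {G : GridDiagram n} {G' : GridDiagram (n + 1)} :
      (∃ i, StabXSWat G G' i) → TransMove ⟨n + 1, G'⟩ ⟨n, G⟩

/-- A sequence of grid moves realizing a decomposable Lagrangian cobordism from the
link of the first diagram to the link of the second, recording the number `p` of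
pinches (swap moves) and the number `b` of births used. -/
inductive CobSeq : GD → GD → ℕ → ℕ → Prop
  | refl (g : GD) : CobSeq g g 0 0
  | leg {g h h' : GD} {p b : ℕ} : CobSeq g h p b → LegMove h h' → CobSeq g h' p b
  | pinchX {g : GD} {n : ℕ} {Gm Gp : GridDiagram n} {p b : ℕ} :
      CobSeq g ⟨n, Gm⟩ p b → XSwap Gm Gp → CobSeq g ⟨n, Gp⟩ (p + 1) b
  | pinchO {g : GD} {n : ℕ} {Gm Gp : GridDiagram n} {p b : ℕ} :
      CobSeq g ⟨n, Gm⟩ p b → OSwap Gm Gp → CobSeq g ⟨n, Gp⟩ (p + 1) b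
  | birth {g : GD} {n : ℕ} {Gm : GridDiagram n} {Gp : GridDiagram (n + 2)} {p b : ℕ} :
      CobSeq g ⟨n, Gm⟩ p b → Birth Gm Gp → CobSeq g ⟨n + 2, Gp⟩ p (b + 1)

end Grid

theorem Equiv.Perm.apply_inv_self {α : Type*} (f : Equiv.Perm α) (x : α) : f (f⁻¹ x) = x :=
  f.apply_symm_apply x

theorem Equiv.Perm.inv_apply_self {α : Type*} (f : Equiv.Perm α) (x : α) : f⁻¹ (f x) = x :=
  f.symm_apply_apply x

open Grid
namespace SwapAux
open Grid Finset

variable {n : ℕ}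

/-- The "bad" states: those whose point in row `u+1` lies in a column in `(c2, c3]`. -/
def Bd (c2 c3 U1 : Fin n) (x : Equiv.Perm (Fin n)) : Prop :=
  c2.1 < (x⁻¹ U1).1 ∧ (x⁻¹ U1).1 ≤ c3.1

instance (c2 c3 U1 : Fin n) (x : Equiv.Perm (Fin n)) : Decidable (Bd c2 c3 U1 x) := by
  unfold Bd; infer_instance

/-- The pinch map: projection onto the good states. -/
def proj (c2 c3 U1 : Fin n) : GCt n →ₗ[Pv] GCt n where
  toFun z := fun x => if Bd c2 c3 U1 x then 0 else z x
  map_add' a b := by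
    funext x
    by_cases hx : Bd c2 c3 U1 x <;> simp [hx]
  map_smul' c a := by
    funext x
    by_cases hx : Bd c2 c3 U1 x <;> simp [hx]

lemma proj_apply (c2 c3 U1 : Fin n) (z : GCt n) (x : Equiv.Perm (Fin n)) :
    proj c2 c3 U1 z x = if Bd c2 c3 U1 x then 0 else z x := rfl

lemma proj_basT {c2 c3 U1 : Fin n} {w : Equiv.Perm (Fin n)} (hw : ¬ Bd c2 c3 U1 w) :
    proj c2 c3 U1 (basT w) = basT w := by
  funext x
  rw [proj_apply]
  split_ifs with hx
  · have hxw : x ≠ w := fun e => hw (e ▸ hx)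
    simp [basT, hxw]
  · rfl


lemma qlt_half {a b : ℕ} : (a : ℚ) < (b : ℚ) + 1/2 ↔ a ≤ b := by
  constructor
  · intro hq
    by_contra hc
    push_neg at hc
    have h1 : (b : ℚ) + 1 ≤ (a : ℚ) := by exact_mod_cast hc
    linarith
  · intro hn
    have h1 : (a : ℚ) ≤ (b : ℚ) := by exact_mod_cast hn
    linarith

lemma half_qlt {a b : ℕ} : (b : ℚ) + 1/2 < (a : ℚ) ↔ b < a := by
  constructor
  · intro hq
    by_contra hc
    push_neg at hc
    have h1 : (a : ℚ) ≤ (b : ℚ) := by exact_mod_cast hc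
    linarith
  · intro hn
    have h1 : (b : ℚ) + 1 ≤ (a : ℚ) := by exact_mod_cast hn
    linarith

lemma half_lt_half {a b : ℕ} : (a : ℚ) + 1/2 < (b : ℚ) + 1/2 ↔ a < b := by
  rw [add_lt_add_iff_right]
  exact Nat.cast_lt

lemma Icnt_sq (f g : Fin n → ℚ × ℚ) (hf : Function.Injective f) (hg : Function.Injective g) :
    Icnt (Finset.univ.image f) (Finset.univ.image g) =
      ((Finset.univ ×ˢ Finset.univ : Finset (Fin n × Fin n)).filter fun p =>
        (f p.1).1 < (g p.2).1 ∧ (f p.1).2 < (g p.2).2).card := by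
  unfold Icnt
  have h1 : (Finset.univ.image f) ×ˢ (Finset.univ.image g)
      = (Finset.univ ×ˢ Finset.univ).image fun p : Fin n × Fin n => (f p.1, g p.2) := by
    ext q
    simp only [Finset.mem_product, Finset.mem_image, Finset.mem_univ, true_and, and_true]
    constructor
    · rintro ⟨⟨a, ha⟩, b, hb⟩
      exact ⟨(a, b), Prod.ext ha hb⟩
    · rintro ⟨p, hp⟩
      exact ⟨⟨p.1, congrArg Prod.fst hp⟩, ⟨p.2, congrArg Prod.snd hp⟩⟩
  have hinj : Function.Injective fun p : Fin n × Fin n => (f p.1, g p.2) := by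
    intro p q hpq
    have e1 := congrArg Prod.fst hpq
    have e2 := congrArg Prod.snd hpq
    simp only at e1 e2
    exact Prod.ext (hf e1) (hg e2)
  rw [h1, Finset.filter_image, Finset.card_image_of_injective _ hinj]

lemma Icnt_st_O (G : GridDiagram n) (x : Equiv.Perm (Fin n)) :
    Icnt (ptsSt x) (ptsO G) =
      ((Finset.univ ×ˢ Finset.univ : Finset (Fin n × Fin n)).filter fun p =>
        p.1.1 ≤ p.2.1 ∧ (x p.1).1 ≤ (G.σO p.2).1).card := by
  have hf : Function.Injective (fun i : Fin n => ((i.1 : ℚ), ((x i).1 : ℚ))) := by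
    intro a b hab
    have e := congrArg Prod.fst hab
    simp only at e
    exact Fin.ext (by exact_mod_cast e)
  have hg : Function.Injective (fun i : Fin n => ((i.1 : ℚ) + 1/2, ((G.σO i).1 : ℚ) + 1/2)) := by
    intro a b hab
    have e := congrArg Prod.fst hab
    simp only at e
    have e2 : (a.1 : ℚ) = (b.1 : ℚ) := by linarith
    exact Fin.ext (by exact_mod_cast e2)
  unfold ptsSt ptsO
  rw [Icnt_sq _ _ hf hg]
  congr 1
  refine Finset.filter_congr fun p _ => ?_
  exact and_congr qlt_half qlt_half

lemma Icnt_O_st (G : GridDiagram n) (x : Equiv.Perm (Fin n)) :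
    Icnt (ptsO G) (ptsSt x) =
      ((Finset.univ ×ˢ Finset.univ : Finset (Fin n × Fin n)).filter fun p =>
        p.1.1 < p.2.1 ∧ (G.σO p.1).1 < (x p.2).1).card := by
  have hf : Function.Injective (fun i : Fin n => ((i.1 : ℚ), ((x i).1 : ℚ))) := by
    intro a b hab
    have e := congrArg Prod.fst hab
    simp only at e
    exact Fin.ext (by exact_mod_cast e)
  have hg : Function.Injective (fun i : Fin n => ((i.1 : ℚ) + 1/2, ((G.σO i).1 : ℚ) + 1/2)) := by
    intro a b hab
    have e := congrArg Prod.fst hab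
    simp only at e
    have e2 : (a.1 : ℚ) = (b.1 : ℚ) := by linarith
    exact Fin.ext (by exact_mod_cast e2)
  unfold ptsSt ptsO
  rw [Icnt_sq _ _ hg hf]
  congr 1
  refine Finset.filter_congr fun p _ => ?_
  exact and_congr half_qlt half_qlt

lemma Icnt_O_O (G : GridDiagram n) :
    Icnt (ptsO G) (ptsO G) =
      ((Finset.univ ×ˢ Finset.univ : Finset (Fin n × Fin n)).filter fun p =>
        p.1.1 < p.2.1 ∧ (G.σO p.1).1 < (G.σO p.2).1).card := by
  have hg : Function.Injective (fun i : Fin n => ((i.1 : ℚ) + 1/2, ((G.σO i).1 : ℚ) + 1/2)) := by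
    intro a b hab
    have e := congrArg Prod.fst hab
    simp only at e
    have e2 : (a.1 : ℚ) = (b.1 : ℚ) := by linarith
    exact Fin.ext (by exact_mod_cast e2)
  unfold ptsO
  rw [Icnt_sq _ _ hg hg]
  congr 1
  refine Finset.filter_congr fun p _ => ?_
  exact and_congr half_lt_half half_lt_half

section Main

variable {Gm Gp : GridDiagram n} {U U1 c2 c3 : Fin n}

/-- The inverse of `x * swap i j` applied to `U1`. -/
lemma swap_inv_apply (x : Equiv.Perm (Fin n)) (i j U1 : Fin n) :
    (x * Equiv.swap i j)⁻¹ U1 = Equiv.swap i j (x⁻¹ U1) := by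
  rw [mul_inv_rev, Equiv.Perm.mul_apply, Equiv.swap_inv]

variable (hU1 : U1.1 = U.1 + 1)
  (hm2 : Gm.σO c2 = U1) (hm3 : Gm.σO c3 = U)
  (hp2 : Gp.σO c2 = U) (hp3 : Gp.σO c3 = U1)
  (hok : ∀ k, k ≠ c2 → k ≠ c3 → Gp.σO k = Gm.σO k)
  (hc23 : c2.1 < c3.1)

include hU1 hm3 hc23 in
lemma good_to_bad {x : Equiv.Perm (Fin n)} {i j : Fin n} (hij : i ≠ j)
    (hgx : ¬ Bd c2 c3 U1 x) (hby : Bd c2 c3 U1 (x * Equiv.swap i j)) (hm2' : Gm.σO c2 = U1) :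
    ∃ k, rectO Gm x i j k := by
  have hx0 : x (x⁻¹ U1) = U1 := Equiv.Perm.apply_inv_self x U1
  unfold Bd at hgx hby
  rw [swap_inv_apply] at hby
  set i0 := x⁻¹ U1 with hi0
  have hvij : i.1 ≠ j.1 := fun e => hij (Fin.ext e)
  rcases eq_or_ne i i0 with rfl | hii0
  · rw [Equiv.swap_apply_left] at hby
    refine ⟨c2, ?_, ?_⟩
    · unfold inCyc; omega
    · rw [hx0, hm2']
      unfold inCyc; omega
  · rcases eq_or_ne j i0 with rfl | hji0
    · rw [Equiv.swap_apply_right] at hby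
      refine ⟨c3, ?_, ?_⟩
      · unfold inCyc; omega
      · rw [hx0, hm3]
        unfold inCyc; omega
    · rw [Equiv.swap_apply_of_ne_of_ne (Ne.symm hii0) (Ne.symm hji0)] at hby
      exact absurd hby hgx

include hU1 hp2 hp3 hc23 in
lemma bad_to_good {x : Equiv.Perm (Fin n)} {i j : Fin n} (hij : i ≠ j)
    (hbx : Bd c2 c3 U1 x) (hgy : ¬ Bd c2 c3 U1 (x * Equiv.swap i j)) :
    ∃ k, rectO Gp x i j k := by
  have hx0 : x (x⁻¹ U1) = U1 := Equiv.Perm.apply_inv_self x U1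
  unfold Bd at hbx hgy
  rw [swap_inv_apply] at hgy
  set i0 := x⁻¹ U1 with hi0
  have hvij : i.1 ≠ j.1 := fun e => hij (Fin.ext e)
  rcases eq_or_ne i i0 with rfl | hii0
  · rw [Equiv.swap_apply_left] at hgy
    refine ⟨c3, ?_, ?_⟩
    · unfold inCyc; omega
    · rw [hx0, hp3]
      unfold inCyc; omega
  · rcases eq_or_ne j i0 with rfl | hji0
    · rw [Equiv.swap_apply_right] at hgy
      refine ⟨c2, ?_, ?_⟩
      · unfold inCyc; omega
      · rw [hx0, hp2]
        unfold inCyc; omega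
    · rw [Equiv.swap_apply_of_ne_of_ne (Ne.symm hii0) (Ne.symm hji0)] at hgy
      exact absurd hbx hgy
lemma inCyc_self {a c : ℕ} : inCyc a c a := by unfold inCyc; omega

lemma inCyc_up {a t s : ℕ} (hs : s = t + 1) : inCyc a s t := by unfold inCyc; omega

lemma not_inCyc_down {w t s : ℕ} (hs : s = t + 1) (hw : w ≠ s) : ¬ inCyc s w t := by
  unfold inCyc; omega

lemma not_inCyc_top {a t s : ℕ} (hs : s = t + 1) (ha : a ≠ s) : ¬ inCyc a s s := by
  unfold inCyc; omega

lemma inCyc_shift {a w t s : ℕ} (hs : s = t + 1) (ha : a ≠ s) (hw : w ≠ s) :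
    inCyc a w s ↔ inCyc a w t := by unfold inCyc; omega

lemma inCyc_move {i j p q : ℕ} (hpq : p < q) (hij : i ≠ j)
    (hi : ¬(p < i ∧ i ≤ q)) (hj : ¬(p < j ∧ j ≤ q)) : inCyc i j p ↔ inCyc i j q := by
  unfold inCyc; omega

include hU1 hm2 hm3 hp2 hp3 hok hc23 in
lemma main_dich {x : Equiv.Perm (Fin n)} {i j : Fin n} (hij : i ≠ j)
    (hgx : ¬ Bd c2 c3 U1 x) (hgy : ¬ Bd c2 c3 U1 (x * Equiv.swap i j)) :
    (∃ k, rectO Gm x i j k) ↔ (∃ k, rectO Gp x i j k) := by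
  have hx0 : x (x⁻¹ U1) = U1 := Equiv.Perm.apply_inv_self x U1
  unfold Bd at hgx hgy
  rw [swap_inv_apply] at hgy
  set i0 := x⁻¹ U1 with hi0
  have hvij : i.1 ≠ j.1 := fun e => hij (Fin.ext e)
  have hxval : ∀ a : Fin n, a ≠ i0 → (x a).1 ≠ U1.1 := by
    intro a ha hva
    exact ha (by rw [hi0, ← Fin.ext hva]; exact (Equiv.Perm.inv_apply_self x a).symm)
  have hvm2 : (Gm.σO c2).1 = U1.1 := congrArg Fin.val hm2
  have hvm3 : (Gm.σO c3).1 = U.1 := congrArg Fin.val hm3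
  have hvp2 : (Gp.σO c2).1 = U.1 := congrArg Fin.val hp2
  have hvp3 : (Gp.σO c3).1 = U1.1 := congrArg Fin.val hp3
  rcases eq_or_ne i i0 with rfl | hii0
  · -- i = i0 : x i = U1
    rw [Equiv.swap_apply_left] at hgy
    have hvx : (x i0).1 = U1.1 := congrArg Fin.val hx0
    have hxj : (x j).1 ≠ U1.1 := hxval j (Ne.symm hij)
    constructor
    · rintro ⟨k, hcol, hrow⟩
      rcases eq_or_ne k c2 with hk2 | hk2
      · rw [hk2] at hcol hrow
        refine ⟨c3, (inCyc_move hc23 hvij hgx hgy).mp hcol, ?_⟩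
        rw [hvx, hvp3]; exact inCyc_self
      · rcases eq_or_ne k c3 with hk3 | hk3
        · rw [hk3] at hcol hrow
          rw [hvx, hvm3] at hrow
          exact absurd hrow (not_inCyc_down hU1 hxj)
        · exact ⟨k, hcol, by rw [← hok k hk2 hk3] at hrow; exact hrow⟩
    · rintro ⟨k, hcol, hrow⟩
      rcases eq_or_ne k c2 with hk2 | hk2
      · rw [hk2] at hcol hrow
        rw [hvx, hvp2] at hrow
        exact absurd hrow (not_inCyc_down hU1 hxj)
      · rcases eq_or_ne k c3 with hk3 | hk3
        · rw [hk3] at hcol hrow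
          refine ⟨c2, (inCyc_move hc23 hvij hgx hgy).mpr hcol, ?_⟩
          rw [hvx, hvm2]; exact inCyc_self
        · exact ⟨k, hcol, by rw [hok k hk2 hk3] at hrow; exact hrow⟩
  · rcases eq_or_ne j i0 with rfl | hji0
    · -- j = i0 : x j = U1
      rw [Equiv.swap_apply_right] at hgy
      have hvx : (x i0).1 = U1.1 := congrArg Fin.val hx0
      have hxi : (x i).1 ≠ U1.1 := hxval i hii0
      constructor
      · rintro ⟨k, hcol, hrow⟩
        rcases eq_or_ne k c2 with hk2 | hk2
        · rw [hk2] at hcol hrow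
          rw [hvx, hvm2] at hrow
          exact absurd hrow (not_inCyc_top hU1 hxi)
        · rcases eq_or_ne k c3 with hk3 | hk3
          · rw [hk3] at hcol hrow
            refine ⟨c2, (inCyc_move hc23 hvij hgy hgx).mpr hcol, ?_⟩
            rw [hvx, hvp2]; exact inCyc_up hU1
          · exact ⟨k, hcol, by rw [← hok k hk2 hk3] at hrow; exact hrow⟩
      · rintro ⟨k, hcol, hrow⟩
        rcases eq_or_ne k c2 with hk2 | hk2
        · rw [hk2] at hcol hrow
          refine ⟨c3, (inCyc_move hc23 hvij hgy hgx).mp hcol, ?_⟩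
          rw [hvx, hvm3]; exact inCyc_up hU1
        · rcases eq_or_ne k c3 with hk3 | hk3
          · rw [hk3] at hcol hrow
            rw [hvx, hvp3] at hrow
            exact absurd hrow (not_inCyc_top hU1 hxi)
          · exact ⟨k, hcol, by rw [hok k hk2 hk3] at hrow; exact hrow⟩
    · -- neither i nor j moves the distinguished point
      have hxi : (x i).1 ≠ U1.1 := hxval i hii0
      have hxj : (x j).1 ≠ U1.1 := hxval j hji0
      apply exists_congr
      intro k
      rcases eq_or_ne k c2 with hk2 | hk2
      · show (inCyc i.1 j.1 k.1 ∧ inCyc (x i).1 (x j).1 (Gm.σO k).1) ↔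
          (inCyc i.1 j.1 k.1 ∧ inCyc (x i).1 (x j).1 (Gp.σO k).1)
        rw [hk2, hvm2, hvp2]
        exact and_congr_right fun _ => inCyc_shift hU1 hxi hxj
      · rcases eq_or_ne k c3 with hk3 | hk3
        · show (inCyc i.1 j.1 k.1 ∧ inCyc (x i).1 (x j).1 (Gm.σO k).1) ↔
            (inCyc i.1 j.1 k.1 ∧ inCyc (x i).1 (x j).1 (Gp.σO k).1)
          rw [hk3, hvm3, hvp3]
          exact and_congr_right fun _ => (inCyc_shift hU1 hxi hxj).symm
        · show (inCyc i.1 j.1 k.1 ∧ inCyc (x i).1 (x j).1 (Gm.σO k).1) ↔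
            (inCyc i.1 j.1 k.1 ∧ inCyc (x i).1 (x j).1 (Gp.σO k).1)
          rw [hok k hk2 hk3]

lemma DxF_apply (G : GridDiagram n) (x y : Equiv.Perm (Fin n)) :
    DxF G x y = ∑ i : Fin n, ∑ j : Fin n,
      if (i ≠ j ∧ ∀ k, ¬ rectO G x i j k) ∧ y = x * Equiv.swap i j then
        (Polynomial.X : Pv) ^ intCount x i j else 0 := by
  unfold DxF
  rw [Finset.sum_apply]
  refine Finset.sum_congr rfl fun i _ => ?_
  rw [Finset.sum_apply]
  refine Finset.sum_congr rfl fun j _ => ?_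
  by_cases hc : i ≠ j ∧ ∀ k, ¬ rectO G x i j k
  · rw [if_pos hc]
    by_cases hy : y = x * Equiv.swap i j
    · rw [if_pos ⟨hc, hy⟩, Pi.smul_apply, smul_eq_mul]
      simp [basT, hy]
    · rw [if_neg fun h => hy h.2, Pi.smul_apply, smul_eq_mul]
      simp [basT, hy]
  · rw [if_neg hc, if_neg fun h => hc h.1]
    rfl

include hU1 hm2 hm3 hc23 in
lemma DxFm_vanish {x y : Equiv.Perm (Fin n)} (hgx : ¬ Bd c2 c3 U1 x)
    (hby : Bd c2 c3 U1 y) : DxF Gm x y = 0 := by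
  rw [DxF_apply]
  refine Finset.sum_eq_zero fun i _ => Finset.sum_eq_zero fun j _ => ?_
  rw [if_neg]
  rintro ⟨⟨hij, hrect⟩, rfl⟩
  obtain ⟨k, hk⟩ := good_to_bad hU1 hm3 hc23 hij hgx hby hm2
  exact hrect k hk

include hU1 hp2 hp3 hc23 in
lemma DxFp_vanish {x y : Equiv.Perm (Fin n)} (hbx : Bd c2 c3 U1 x)
    (hgy : ¬ Bd c2 c3 U1 y) : DxF Gp x y = 0 := by
  rw [DxF_apply]
  refine Finset.sum_eq_zero fun i _ => Finset.sum_eq_zero fun j _ => ?_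
  rw [if_neg]
  rintro ⟨⟨hij, hrect⟩, rfl⟩
  obtain ⟨k, hk⟩ := bad_to_good hU1 hp2 hp3 hc23 hij hbx hgy
  exact hrect k hk

include hU1 hm2 hm3 hp2 hp3 hok hc23 in
lemma DxF_agree {x y : Equiv.Perm (Fin n)} (hgx : ¬ Bd c2 c3 U1 x)
    (hgy : ¬ Bd c2 c3 U1 y) : DxF Gm x y = DxF Gp x y := by
  rw [DxF_apply, DxF_apply]
  refine Finset.sum_congr rfl fun i _ => Finset.sum_congr rfl fun j _ => ?_
  refine if_congr ?_ rfl rfl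
  constructor
  · rintro ⟨⟨hij, hrect⟩, h2⟩
    refine ⟨⟨hij, fun k hk => ?_⟩, h2⟩
    obtain ⟨k', hk'⟩ := (main_dich hU1 hm2 hm3 hp2 hp3 hok hc23 hij hgx (h2 ▸ hgy)).mpr ⟨k, hk⟩
    exact hrect k' hk'
  · rintro ⟨⟨hij, hrect⟩, h2⟩
    refine ⟨⟨hij, fun k hk => ?_⟩, h2⟩
    obtain ⟨k', hk'⟩ := (main_dich hU1 hm2 hm3 hp2 hp3 hok hc23 hij hgx (h2 ▸ hgy)).mp ⟨k, hk⟩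
    exact hrect k' hk'

include hU1 hm2 hm3 hp2 hp3 hok hc23 in
lemma chain_eq : (dF Gm).comp (proj c2 c3 U1) = (proj c2 c3 U1).comp (dF Gp) := by
  refine LinearMap.ext fun z => ?_
  funext y
  show dF Gm (proj c2 c3 U1 z) y = proj c2 c3 U1 (dF Gp z) y
  rw [proj_apply]
  show (∑ x : Equiv.Perm (Fin n), (proj c2 c3 U1 z) x • DxF Gm x) y
      = if Bd c2 c3 U1 y then 0 else (∑ x : Equiv.Perm (Fin n), z x • DxF Gp x) y
  rw [Finset.sum_apply]
  by_cases hy : Bd c2 c3 U1 y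
  · rw [if_pos hy]
    refine Finset.sum_eq_zero fun x _ => ?_
    rw [Pi.smul_apply, smul_eq_mul, proj_apply]
    by_cases hx : Bd c2 c3 U1 x
    · rw [if_pos hx, zero_mul]
    · rw [if_neg hx, DxFm_vanish hU1 hm2 hm3 hc23 hx hy, mul_zero]
  · rw [if_neg hy, Finset.sum_apply]
    refine Finset.sum_congr rfl fun x _ => ?_
    rw [Pi.smul_apply, Pi.smul_apply, smul_eq_mul, smul_eq_mul, proj_apply]
    by_cases hx : Bd c2 c3 U1 x
    · rw [if_pos hx, zero_mul, DxFp_vanish hU1 hp2 hp3 hc23 hx hy, mul_zero]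
    · rw [if_neg hx, DxF_agree hU1 hm2 hm3 hp2 hp3 hok hc23 hx hy]

include hU1 hm2 hm3 hp2 hp3 hok hc23 in
lemma count_st_O {x : Equiv.Perm (Fin n)} (hgx : ¬ Bd c2 c3 U1 x) :
    Icnt (ptsSt x) (ptsO Gm) = Icnt (ptsSt x) (ptsO Gp) := by
  unfold Bd at hgx
  rw [Icnt_st_O, Icnt_st_O]
  set i0 := x⁻¹ U1 with hi0
  have hx0 : (x i0).1 = U.1 + 1 := by
    rw [hi0, Equiv.Perm.apply_inv_self]; exact hU1
  have hxne : ∀ a : Fin n, a ≠ i0 → (x a).1 ≠ U.1 + 1 := by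
    intro a ha hva
    refine ha ?_
    rw [hi0]
    have : x a = U1 := Fin.ext (by rw [hva, hU1])
    rw [← this, Equiv.Perm.inv_apply_self]
  have hvm2 : (Gm.σO c2).1 = U.1 + 1 := by rw [hm2]; exact hU1
  have hvm3 : (Gm.σO c3).1 = U.1 := congrArg Fin.val hm3
  have hvp2 : (Gp.σO c2).1 = U.1 := congrArg Fin.val hp2
  have hvp3 : (Gp.σO c3).1 = U.1 + 1 := by rw [hp3]; exact hU1
  have hWm : ∀ b : Fin n, b ≠ c2 → b ≠ c3 → (Gm.σO b).1 ≠ U.1 ∧ (Gm.σO b).1 ≠ U.1 + 1 := by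
    intro b hb2 hb3
    constructor
    · intro e
      exact hb3 (Gm.σO.injective (Fin.ext (by rw [e, hvm3])))
    · intro e
      exact hb2 (Gm.σO.injective (Fin.ext (by rw [e, hvm2])))
  have hne32 : ¬ (c3 = c2) := by
    intro e
    have := congrArg Fin.val e
    omega
  have hmem : ∀ p : Fin n × Fin n, p ∈ (Finset.univ ×ˢ Finset.univ : Finset (Fin n × Fin n)) := by
    intro p
    simp [Finset.mem_product]
  set t : Fin n × Fin n → Fin n × Fin n := fun p =>
    if p.1 = i0 ∧ p.2 = c2 then (p.1, c3) else if p.1 = i0 ∧ p.2 = c3 then (p.1, c2) else p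
    with ht
  have tapp : ∀ a b : Fin n, t (a, b) =
      if a = i0 ∧ b = c2 then (a, c3) else if a = i0 ∧ b = c3 then (a, c2) else (a, b) :=
    fun a b => by rw [ht]
  have htt : ∀ p : Fin n × Fin n, t (t p) = p := by
    rintro ⟨a, b⟩
    by_cases ha : a = i0
    · by_cases hb2 : b = c2
      · rw [tapp a b, if_pos ⟨ha, hb2⟩, tapp a c3, if_neg (fun h => hne32 h.2),
          if_pos ⟨ha, rfl⟩, hb2]
      · by_cases hb3 : b = c3
        · rw [tapp a b, if_neg (fun h => hb2 h.2), if_pos ⟨ha, hb3⟩, tapp a c2,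
            if_pos ⟨ha, rfl⟩, hb3]
        · rw [tapp a b, if_neg (fun h => hb2 h.2), if_neg (fun h => hb3 h.2), tapp a b,
            if_neg (fun h => hb2 h.2), if_neg (fun h => hb3 h.2)]
    · rw [tapp a b, if_neg (fun h => ha h.1), if_neg (fun h => ha h.1), tapp a b,
        if_neg (fun h => ha h.1), if_neg (fun h => ha h.1)]
  apply Finset.card_nbij' t t
  · rintro ⟨a, b⟩ hp
    rw [Finset.mem_coe, Finset.mem_filter] at hp ⊢
    obtain ⟨-, hp1, hp2⟩ := hp
    refine ⟨hmem _, ?_⟩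
    rw [ht]
    dsimp only at hp1 hp2 ⊢
    split_ifs with h1 h2 <;> dsimp only
    · obtain ⟨ea, eb⟩ := h1
      have f1 : (x a).1 = U.1 + 1 := by rw [ea]; exact hx0
      have f2 : b.1 = c2.1 := congrArg Fin.val eb
      refine ⟨by omega, by rw [hvp3]; omega⟩
    · obtain ⟨ea, eb⟩ := h2
      rw [eb, hvm3] at hp2
      have f1 : (x a).1 = U.1 + 1 := by rw [ea]; exact hx0
      exact absurd hp2 (by omega)
    · by_cases hb2 : b = c2
      · have ha : a ≠ i0 := fun e => h1 ⟨e, hb2⟩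
        have f1 := hxne a ha
        rw [hb2, hvm2] at hp2
        rw [hb2] at hp1 ⊢
        refine ⟨hp1, by rw [hvp2]; omega⟩
      · by_cases hb3 : b = c3
        · have ha : a ≠ i0 := fun e => h2 ⟨e, hb3⟩
          have f1 := hxne a ha
          rw [hb3, hvm3] at hp2
          rw [hb3] at hp1 ⊢
          refine ⟨hp1, by rw [hvp3]; omega⟩
        · refine ⟨hp1, by rw [hok b hb2 hb3]; exact hp2⟩
  · rintro ⟨a, b⟩ hp
    rw [Finset.mem_coe, Finset.mem_filter] at hp ⊢
    obtain ⟨-, hp1, hp2⟩ := hp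
    refine ⟨hmem _, ?_⟩
    rw [ht]
    dsimp only at hp1 hp2 ⊢
    split_ifs with h1 h2 <;> dsimp only
    · obtain ⟨ea, eb⟩ := h1
      rw [eb, hvp2] at hp2
      have f1 : (x a).1 = U.1 + 1 := by rw [ea]; exact hx0
      exact absurd hp2 (by omega)
    · obtain ⟨ea, eb⟩ := h2
      have f1 : (x a).1 = U.1 + 1 := by rw [ea]; exact hx0
      have f2 : b.1 = c3.1 := congrArg Fin.val eb
      have f3 : a.1 = i0.1 := congrArg Fin.val ea
      rw [eb] at hp1
      refine ⟨by omega, by rw [hvm2]; omega⟩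
    · by_cases hb2 : b = c2
      · have ha : a ≠ i0 := fun e => h1 ⟨e, hb2⟩
        have f1 := hxne a ha
        rw [hb2, hvp2] at hp2
        rw [hb2] at hp1 ⊢
        refine ⟨hp1, by rw [hvm2]; omega⟩
      · by_cases hb3 : b = c3
        · have ha : a ≠ i0 := fun e => h2 ⟨e, hb3⟩
          have f1 := hxne a ha
          rw [hb3, hvp3] at hp2
          rw [hb3] at hp1 ⊢
          refine ⟨hp1, by rw [hvm3]; omega⟩
        · refine ⟨hp1, by rw [← hok b hb2 hb3]; exact hp2⟩
  · exact fun p _ => htt p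
  · exact fun p _ => htt p

include hU1 hm2 hm3 hp2 hp3 hok hc23 in
lemma count_O_st {x : Equiv.Perm (Fin n)} (hgx : ¬ Bd c2 c3 U1 x) :
    Icnt (ptsO Gm) (ptsSt x) = Icnt (ptsO Gp) (ptsSt x) := by
  unfold Bd at hgx
  rw [Icnt_O_st, Icnt_O_st]
  set i0 := x⁻¹ U1 with hi0
  have hx0 : (x i0).1 = U.1 + 1 := by
    rw [hi0, Equiv.Perm.apply_inv_self]; exact hU1
  have hxne : ∀ a : Fin n, a ≠ i0 → (x a).1 ≠ U.1 + 1 := by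
    intro a ha hva
    refine ha ?_
    rw [hi0]
    have : x a = U1 := Fin.ext (by rw [hva, hU1])
    rw [← this, Equiv.Perm.inv_apply_self]
  have hvm2 : (Gm.σO c2).1 = U.1 + 1 := by rw [hm2]; exact hU1
  have hvm3 : (Gm.σO c3).1 = U.1 := congrArg Fin.val hm3
  have hvp2 : (Gp.σO c2).1 = U.1 := congrArg Fin.val hp2
  have hvp3 : (Gp.σO c3).1 = U.1 + 1 := by rw [hp3]; exact hU1
  have hne32 : ¬ (c3 = c2) := by
    intro e
    have := congrArg Fin.val e
    omega
  have hmem : ∀ p : Fin n × Fin n, p ∈ (Finset.univ ×ˢ Finset.univ : Finset (Fin n × Fin n)) := by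
    intro p
    simp [Finset.mem_product]
  set t : Fin n × Fin n → Fin n × Fin n := fun p =>
    if p.2 = i0 ∧ p.1 = c2 then (c3, p.2) else if p.2 = i0 ∧ p.1 = c3 then (c2, p.2) else p
    with ht
  have tapp : ∀ b a : Fin n, t (b, a) =
      if a = i0 ∧ b = c2 then (c3, a) else if a = i0 ∧ b = c3 then (c2, a) else (b, a) :=
    fun b a => by rw [ht]
  have htt : ∀ p : Fin n × Fin n, t (t p) = p := by
    rintro ⟨b, a⟩
    by_cases ha : a = i0
    · by_cases hb2 : b = c2
      · rw [tapp b a, if_pos ⟨ha, hb2⟩, tapp c3 a, if_neg (fun h => hne32 h.2),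
          if_pos ⟨ha, rfl⟩, hb2]
      · by_cases hb3 : b = c3
        · rw [tapp b a, if_neg (fun h => hb2 h.2), if_pos ⟨ha, hb3⟩, tapp c2 a,
            if_pos ⟨ha, rfl⟩, hb3]
        · rw [tapp b a, if_neg (fun h => hb2 h.2), if_neg (fun h => hb3 h.2), tapp b a,
            if_neg (fun h => hb2 h.2), if_neg (fun h => hb3 h.2)]
    · rw [tapp b a, if_neg (fun h => ha h.1), if_neg (fun h => ha h.1), tapp b a,
        if_neg (fun h => ha h.1), if_neg (fun h => ha h.1)]
  apply Finset.card_nbij' t t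
  · rintro ⟨b, a⟩ hp
    rw [Finset.mem_coe, Finset.mem_filter] at hp ⊢
    obtain ⟨-, hp1, hp2⟩ := hp
    refine ⟨hmem _, ?_⟩
    rw [ht]
    dsimp only at hp1 hp2 ⊢
    split_ifs with h1 h2 <;> dsimp only
    · obtain ⟨ea, eb⟩ := h1
      rw [eb, hvm2] at hp2
      have f1 : (x a).1 = U.1 + 1 := by rw [ea]; exact hx0
      exact absurd hp2 (by omega)
    · obtain ⟨ea, eb⟩ := h2
      have f1 : (x a).1 = U.1 + 1 := by rw [ea]; exact hx0
      have f2 : b.1 = c3.1 := congrArg Fin.val eb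
      refine ⟨by omega, by rw [hvp2]; omega⟩
    · by_cases hb2 : b = c2
      · have ha : a ≠ i0 := fun e => h1 ⟨e, hb2⟩
        have f1 := hxne a ha
        rw [hb2, hvm2] at hp2
        rw [hb2] at hp1 ⊢
        refine ⟨hp1, by rw [hvp2]; omega⟩
      · by_cases hb3 : b = c3
        · have ha : a ≠ i0 := fun e => h2 ⟨e, hb3⟩
          have f1 := hxne a ha
          rw [hb3, hvm3] at hp2
          rw [hb3] at hp1 ⊢
          refine ⟨hp1, by rw [hvp3]; omega⟩
        · refine ⟨hp1, by rw [hok b hb2 hb3]; exact hp2⟩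
  · rintro ⟨b, a⟩ hp
    rw [Finset.mem_coe, Finset.mem_filter] at hp ⊢
    obtain ⟨-, hp1, hp2⟩ := hp
    refine ⟨hmem _, ?_⟩
    rw [ht]
    dsimp only at hp1 hp2 ⊢
    split_ifs with h1 h2 <;> dsimp only
    · obtain ⟨ea, eb⟩ := h1
      have f1 : (x a).1 = U.1 + 1 := by rw [ea]; exact hx0
      have f2 : b.1 = c2.1 := congrArg Fin.val eb
      have f3 : a.1 = i0.1 := congrArg Fin.val ea
      rw [eb] at hp1
      refine ⟨by omega, by rw [hvm3]; omega⟩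
    · obtain ⟨ea, eb⟩ := h2
      rw [eb, hvp3] at hp2
      have f1 : (x a).1 = U.1 + 1 := by rw [ea]; exact hx0
      exact absurd hp2 (by omega)
    · by_cases hb2 : b = c2
      · have ha : a ≠ i0 := fun e => h1 ⟨e, hb2⟩
        have f1 := hxne a ha
        rw [hb2, hvp2] at hp2
        rw [hb2] at hp1 ⊢
        refine ⟨hp1, by rw [hvm2]; omega⟩
      · by_cases hb3 : b = c3
        · have ha : a ≠ i0 := fun e => h2 ⟨e, hb3⟩
          have f1 := hxne a ha
          rw [hb3, hvp3] at hp2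
          rw [hb3] at hp1 ⊢
          refine ⟨hp1, by rw [hvm3]; omega⟩
        · refine ⟨hp1, by rw [← hok b hb2 hb3]; exact hp2⟩
  · exact fun p _ => htt p
  · exact fun p _ => htt p

include hU1 hm2 hm3 hp2 hp3 hok hc23 in
lemma count_O_O : Icnt (ptsO Gp) (ptsO Gp) = Icnt (ptsO Gm) (ptsO Gm) + 1 := by
  rw [Icnt_O_O, Icnt_O_O]
  have hvm2 : (Gm.σO c2).1 = U.1 + 1 := by rw [hm2]; exact hU1
  have hvm3 : (Gm.σO c3).1 = U.1 := congrArg Fin.val hm3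
  have hvp2 : (Gp.σO c2).1 = U.1 := congrArg Fin.val hp2
  have hvp3 : (Gp.σO c3).1 = U.1 + 1 := by rw [hp3]; exact hU1
  have hWm : ∀ b : Fin n, b ≠ c2 → b ≠ c3 → (Gm.σO b).1 ≠ U.1 ∧ (Gm.σO b).1 ≠ U.1 + 1 := by
    intro b hb2 hb3
    constructor
    · intro e
      exact hb3 (Gm.σO.injective (Fin.ext (by rw [e, hvm3])))
    · intro e
      exact hb2 (Gm.σO.injective (Fin.ext (by rw [e, hvm2])))
  have hset : ((Finset.univ ×ˢ Finset.univ : Finset (Fin n × Fin n)).filter fun p =>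
        p.1.1 < p.2.1 ∧ (Gp.σO p.1).1 < (Gp.σO p.2).1)
      = insert (c2, c3) ((Finset.univ ×ˢ Finset.univ : Finset (Fin n × Fin n)).filter fun p =>
        p.1.1 < p.2.1 ∧ (Gm.σO p.1).1 < (Gm.σO p.2).1) := by
    ext ⟨b, d⟩
    simp only [Finset.mem_filter, Finset.mem_insert, Finset.mem_product, Finset.mem_univ,
      true_and, and_true, Prod.mk.injEq]
    rw [show (b = c2 ∧ d = c3) ↔ (b.1 = c2.1 ∧ d.1 = c3.1) by
      constructor
      · rintro ⟨e1, e2⟩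
        exact ⟨congrArg Fin.val e1, congrArg Fin.val e2⟩
      · rintro ⟨e1, e2⟩
        exact ⟨Fin.ext e1, Fin.ext e2⟩]
    by_cases hb2 : b = c2
    · have fb : b.1 = c2.1 := congrArg Fin.val hb2
      have g1 : (Gp.σO b).1 = U.1 := by rw [hb2]; exact hvp2
      have g2 : (Gm.σO b).1 = U.1 + 1 := by rw [hb2]; exact hvm2
      by_cases hd2 : d = c2
      · have fd : d.1 = c2.1 := congrArg Fin.val hd2
        have g3 : (Gp.σO d).1 = U.1 := by rw [hd2]; exact hvp2
        have g4 : (Gm.σO d).1 = U.1 + 1 := by rw [hd2]; exact hvm2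
        omega
      · by_cases hd3 : d = c3
        · have fd : d.1 = c3.1 := congrArg Fin.val hd3
          have g3 : (Gp.σO d).1 = U.1 + 1 := by rw [hd3]; exact hvp3
          have g4 : (Gm.σO d).1 = U.1 := by rw [hd3]; exact hvm3
          omega
        · have g3 : (Gp.σO d).1 = (Gm.σO d).1 := congrArg Fin.val (hok d hd2 hd3)
          obtain ⟨w1, w2⟩ := hWm d hd2 hd3
          have fd : d.1 ≠ c3.1 := fun e => hd3 (Fin.ext e)
          omega
    · by_cases hb3 : b = c3
      · have fb : b.1 = c3.1 := congrArg Fin.val hb3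
        have g1 : (Gp.σO b).1 = U.1 + 1 := by rw [hb3]; exact hvp3
        have g2 : (Gm.σO b).1 = U.1 := by rw [hb3]; exact hvm3
        have fb2 : b.1 ≠ c2.1 := by omega
        by_cases hd2 : d = c2
        · have fd : d.1 = c2.1 := congrArg Fin.val hd2
          have g3 : (Gp.σO d).1 = U.1 := by rw [hd2]; exact hvp2
          have g4 : (Gm.σO d).1 = U.1 + 1 := by rw [hd2]; exact hvm2
          omega
        · by_cases hd3 : d = c3
          · have fd : d.1 = c3.1 := congrArg Fin.val hd3
            have g3 : (Gp.σO d).1 = U.1 + 1 := by rw [hd3]; exact hvp3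
            have g4 : (Gm.σO d).1 = U.1 := by rw [hd3]; exact hvm3
            omega
          · have g3 : (Gp.σO d).1 = (Gm.σO d).1 := congrArg Fin.val (hok d hd2 hd3)
            obtain ⟨w1, w2⟩ := hWm d hd2 hd3
            omega
      · have g1 : (Gp.σO b).1 = (Gm.σO b).1 := congrArg Fin.val (hok b hb2 hb3)
        obtain ⟨w1, w2⟩ := hWm b hb2 hb3
        have fb2 : b.1 ≠ c2.1 := fun e => hb2 (Fin.ext e)
        by_cases hd2 : d = c2
        · have fd : d.1 = c2.1 := congrArg Fin.val hd2
          have g3 : (Gp.σO d).1 = U.1 := by rw [hd2]; exact hvp2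
          have g4 : (Gm.σO d).1 = U.1 + 1 := by rw [hd2]; exact hvm2
          omega
        · by_cases hd3 : d = c3
          · have fd : d.1 = c3.1 := congrArg Fin.val hd3
            have g3 : (Gp.σO d).1 = U.1 + 1 := by rw [hd3]; exact hvp3
            have g4 : (Gm.σO d).1 = U.1 := by rw [hd3]; exact hvm3
            omega
          · have g3 : (Gp.σO d).1 = (Gm.σO d).1 := congrArg Fin.val (hok d hd2 hd3)
            obtain ⟨w3, w4⟩ := hWm d hd2 hd3
            omega
  rw [hset, Finset.card_insert_of_notMem]
  simp only [Finset.mem_filter, Finset.mem_product, Finset.mem_univ, true_and, and_true, not_and]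
  intro _
  rw [hvm2, hvm3]
  omega

include hU1 hm2 hm3 hp2 hp3 hok hc23 in
lemma MO_diff {x : Equiv.Perm (Fin n)} (hgx : ¬ Bd c2 c3 U1 x) :
    MO Gm x = MO Gp x - 1 := by
  have h1 := count_st_O hU1 hm2 hm3 hp2 hp3 hok hc23 hgx
  have h2 := count_O_st hU1 hm2 hm3 hp2 hp3 hok hc23 hgx
  have h3 := count_O_O hU1 hm2 hm3 hp2 hp3 hok hc23
  unfold MO Jfun
  rw [h1, h2, h3]
  push_cast
  ring

end Main
end SwapAux

theorem statement16 {n : ℕ} (Gm Gp : GridDiagram n) (hswap : OSwap Gm Gp) :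
    ∃ P : GCt n →ₗ[Pv] GCt n,
      (dF Gm).comp P = P.comp (dF Gp) ∧
      (∀ (m : ℚ) (z : GCt n), IsMhomogF Gp m z → IsMhomogF Gm (m - 1) (P z)) ∧
      (∀ (j : ℚ) (z : GCt n), inF Gp j z →
        inF Gm (j - ((ncomp Gp : ℚ) - (ncomp Gm : ℚ) + 1) / 2) (P z)) ∧
      P (basT (xp Gp)) = basT (xp Gm) ∧ P (basT (xm Gp)) = basT (xm Gm) := by
  obtain ⟨u, hu, c1, c2, c3, c4, h12, h23, h34, hX1, hO2, hO3, hX4, hXeq, hOeq⟩ := hswap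
  obtain ⟨m, rfl⟩ : ∃ m, n = m + 1 := ⟨n - 1, by omega⟩
  set U1 : Fin (m + 1) := ⟨u.1 + 1, hu⟩ with hU1def
  have hU1 : U1.1 = u.1 + 1 := rfl
  have hp2 : Gp.σO c2 = u := by
    rw [hOeq, Equiv.Perm.mul_apply, hO2]
    exact Equiv.swap_apply_right u U1
  have hp3 : Gp.σO c3 = U1 := by
    rw [hOeq, Equiv.Perm.mul_apply, hO3]
    exact Equiv.swap_apply_left u U1
  have hok : ∀ k, k ≠ c2 → k ≠ c3 → Gp.σO k = Gm.σO k := by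
    intro k hk2 hk3
    rw [hOeq, Equiv.Perm.mul_apply]
    apply Equiv.swap_apply_of_ne_of_ne
    · exact fun e => hk3 (Gm.σO.injective (e.trans hO3.symm))
    · exact fun e => hk2 (Gm.σO.injective (e.trans hO2.symm))
  have hc23 : c2.1 < c3.1 := by omega
  have hMO : ∀ x : Equiv.Perm (Fin (m + 1)), ¬ SwapAux.Bd c2 c3 U1 x →
      MO Gm x = MO Gp x - 1 :=
    fun x hx => SwapAux.MO_diff hU1 hO2 hO3 hp2 hp3 hok hc23 hx
  have hMX : ∀ x : Equiv.Perm (Fin (m + 1)), MXgr Gm x = MXgr Gp x := by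
    intro x
    unfold MXgr ptsX
    rw [hXeq]
  have hAgr : ∀ x : Equiv.Perm (Fin (m + 1)), ¬ SwapAux.Bd c2 c3 U1 x →
      Agr Gm x = Agr Gp x - (((ncomp Gp : ℚ) - (ncomp Gm : ℚ) + 1) / 2) := by
    intro x hx
    unfold Agr
    rw [hMX x, hMO x hx]
    ring
  have hgxm : ¬ SwapAux.Bd c2 c3 U1 (xm Gm) := by
    unfold SwapAux.Bd xm
    have e1 : (Gm.σX)⁻¹ U1 = c1 := by rw [← hX1, Equiv.Perm.inv_apply_self]
    rw [e1]
    omega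
  have hgxp : ¬ SwapAux.Bd c2 c3 U1 (xp Gm) := by
    unfold SwapAux.Bd
    have hul : u < Fin.last m := by
      rw [Fin.lt_def, Fin.val_last]
      omega
    have hrot : finRotate (m + 1) u = U1 := by
      apply Fin.ext
      rw [finRotate_succ_apply, Fin.val_add_one_of_lt hul]
    have e1 : (finRotate (m + 1))⁻¹ U1 = u := by rw [← hrot, Equiv.Perm.inv_apply_self]
    have e2 : (Gm.σX)⁻¹ u = c4 := by rw [← hX4, Equiv.Perm.inv_apply_self]
    have e3 : (xp Gm)⁻¹ U1 = finRotate (m + 1) c4 := by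
      unfold xp
      rw [mul_inv_rev, mul_inv_rev, inv_inv, Equiv.Perm.mul_apply, Equiv.Perm.mul_apply,
        e1, e2]
    rw [e3, finRotate_succ_apply, Fin.val_add_one]
    split_ifs with hc4
    · omega
    · omega
  refine ⟨SwapAux.proj c2 c3 U1, SwapAux.chain_eq hU1 hO2 hO3 hp2 hp3 hok hc23, ?_, ?_, ?_, ?_⟩
  · intro mq z hz x k hk
    rw [SwapAux.proj_apply] at hk
    by_cases hx : SwapAux.Bd c2 c3 U1 x
    · rw [if_pos hx] at hk
      simp at hk
    · rw [if_neg hx] at hk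
      have h1 := hz x k hk
      have h2 : Mgr Gm x = Mgr Gp x - 1 := hMO x hx
      rw [h2]
      linarith
  · intro j z hz x hne
    rw [SwapAux.proj_apply] at hne
    by_cases hx : SwapAux.Bd c2 c3 U1 x
    · rw [if_pos hx] at hne
      exact absurd rfl hne
    · rw [if_neg hx] at hne
      have h1 := hz x hne
      rw [hAgr x hx]
      linarith
  · have hxpe : xp Gp = xp Gm := by unfold xp; rw [hXeq]
    rw [hxpe]
    exact SwapAux.proj_basT hgxp
  · have hxme : xm Gp = xm Gm := by unfold xm; rw [hXeq]
    rw [hxme]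
    exact SwapAux.proj_basT hgxm
end
end

section
/- For every grid diagram G and every grid state y, every rectangle r ∈ Rect(x⁺(G), y) contains an X marking of G, and every rectangle r ∈ Rect(x⁻(G), y) contains an X marking of G. Consequently ∂⁻_{X,big}(x⁺(G)) = 0 and ∂⁻_{X,big}(x⁻(G)) = 0, i.e., the canonical grid states are cycles in GC⁻_big(G), and hence also in ĜC_big(G) and G̃C_big(G). -/
open Finset

noncomputable section

open Grid


lemma inCyc_self' (a c : ℕ) : Grid.inCyc a c a := by unfold Grid.inCyc; omega

lemma inCyc_of_rot' {n : ℕ} (a c t : Fin n) (h : finRotate n t = c) :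
    Grid.inCyc a.1 c.1 t.1 := by
  cases n with
  | zero => exact t.elim0
  | succ m =>
    have hc : c.1 = if t = Fin.last m then 0 else t.1 + 1 := by
      rw [← h]; exact coe_finRotate t
    have ha := a.isLt; have ht := t.isLt
    unfold Grid.inCyc
    by_cases hl : t = Fin.last m
    · have htm : t.1 = m := by simp [hl]
      rw [if_pos hl] at hc
      omega
    · simp only [if_neg hl] at hc
      omega

lemma rectX_exists_xp {n : ℕ} (G : GridDiagram n) (i j : Fin n) :
    rectX G (xp G) i j ((finRotate n)⁻¹ j) := by
  set k := (finRotate n)⁻¹ j with hk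
  have hkj : finRotate n k = j := by rw [hk]; exact Equiv.apply_symm_apply _ _
  have hxpj : xp G j = finRotate n (G.σX k) := by
    simp [xp, Equiv.Perm.mul_apply, hk]
  constructor
  · exact inCyc_of_rot' i j k hkj
  · rw [hxpj]
    exact inCyc_of_rot' (xp G i) (finRotate n (G.σX k)) (G.σX k) rfl

lemma rectX_exists_xm {n : ℕ} (G : GridDiagram n) (i j : Fin n) :
    rectX G (xm G) i j i :=
  ⟨inCyc_self' i.1 j.1, inCyc_self' (G.σX i).1 (G.σX j).1⟩

lemma DxM_xp_eq_zero {n : ℕ} (G : GridDiagram n) : DxM G (xp G) = 0 := by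
  unfold DxM
  rw [Finset.sum_eq_zero]
  intro i _
  rw [Finset.sum_eq_zero]
  intro j _
  rw [if_neg]
  rintro ⟨-, hX⟩
  exact hX _ (rectX_exists_xp G i j)

lemma DxM_xm_eq_zero {n : ℕ} (G : GridDiagram n) : DxM G (xm G) = 0 := by
  unfold DxM
  rw [Finset.sum_eq_zero]
  intro i _
  rw [Finset.sum_eq_zero]
  intro j _
  rw [if_neg]
  rintro ⟨-, hX⟩
  exact hX _ (rectX_exists_xm G i j)

lemma DxT_xp_eq_zero {n : ℕ} (G : GridDiagram n) : DxT G (xp G) = 0 := by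
  unfold DxT
  rw [Finset.sum_eq_zero]
  intro i _
  rw [Finset.sum_eq_zero]
  intro j _
  rw [if_neg]
  rintro ⟨-, hX, -⟩
  exact hX _ (rectX_exists_xp G i j)

lemma DxT_xm_eq_zero {n : ℕ} (G : GridDiagram n) : DxT G (xm G) = 0 := by
  unfold DxT
  rw [Finset.sum_eq_zero]
  intro i _
  rw [Finset.sum_eq_zero]
  intro j _
  rw [if_neg]
  rintro ⟨-, hX, -⟩
  exact hX _ (rectX_exists_xm G i j)

lemma dM_basM {n : ℕ} (G : GridDiagram n) (x : Equiv.Perm (Fin n)) :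
    dM G (basM x) = DxM G x := by
  classical
  show (∑ y : Equiv.Perm (Fin n), basM x y • DxM G y) = DxM G x
  unfold basM
  rw [Finset.sum_eq_single x]
  · simp
  · intro y _ hy
    simp [hy]
  · simp

lemma dT_basT {n : ℕ} (G : GridDiagram n) (x : Equiv.Perm (Fin n)) :
    dT G (basT x) = DxT G x := by
  classical
  show (∑ y : Equiv.Perm (Fin n), basT x y • DxT G y) = DxT G x
  unfold basT
  rw [Finset.sum_eq_single x]
  · simp
  · intro y _ hy
    simp [hy]
  · simp

theorem statement18 {n : ℕ} (G : GridDiagram n) :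
    (∀ i j : Fin n, i ≠ j →
      (∃ k, rectX G (xp G) i j k) ∧ (∃ k, rectX G (xm G) i j k)) ∧
    dM G (basM (xp G)) = 0 ∧ dM G (basM (xm G)) = 0 ∧
    dT G (basT (xp G)) = 0 ∧ dT G (basT (xm G)) = 0 ∧
    (∀ {ℓ : ℕ} (κ : Fin ℓ → Fin n),
      dH G κ ((hatSub G κ).mkQ (basM (xp G))) = 0 ∧
      dH G κ ((hatSub G κ).mkQ (basM (xm G))) = 0) := by
  refine ⟨fun i j hij => ⟨⟨_, rectX_exists_xp G i j⟩, ⟨_, rectX_exists_xm G i j⟩⟩,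
    ?_, ?_, ?_, ?_, ?_⟩
  · rw [dM_basM, DxM_xp_eq_zero]
  · rw [dM_basM, DxM_xm_eq_zero]
  · rw [dT_basT, DxT_xp_eq_zero]
  · rw [dT_basT, DxT_xm_eq_zero]
  · intro ℓ κ
    constructor
    · rw [show (hatSub G κ).mkQ (basM (xp G)) = Submodule.Quotient.mk (basM (xp G)) from rfl,
        dH, Submodule.mapQ_apply, dM_basM, DxM_xp_eq_zero, Submodule.Quotient.mk_eq_zero]
      exact Submodule.zero_mem _
    · rw [show (hatSub G κ).mkQ (basM (xm G)) = Submodule.Quotient.mk (basM (xm G)) from rfl,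
        dH, Submodule.mapQ_apply, dM_basM, DxM_xm_eq_zero, Submodule.Quotient.mk_eq_zero]
      exact Submodule.zero_mem _
end
end

section
/- With the notation of the context (G' obtained from G by a stabilization of type X:SE, with new markings O₁ and X₂, decomposition GC⁻_big(G') = N ⊕ I according to whether a grid state omits or contains the point c, and the maps 𝓗^N_{X₂,big} : I → N and 𝓗⁻_{O₁,big} : N → I): the composition 𝓗⁻_{O₁,big} ∘ 𝓗^N_{X₂,big} is the identity map of I; that is, 𝓗⁻_{O₁,big}(𝓗^N_{X₂,big}(x)) = x for every grid state x containing c. -/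
open Finset

noncomputable section

open Grid

namespace Grid

/-- `V₂^{O₂(r)} ⋯ V_{n+1}^{O_{n+1}(r)} · v^{#(Int(r)∩x)}`: the coefficient monomial of a
rectangle, omitting the variable of the new `O` marking `O₁` (the one in column `i`). -/
def rectMonNoO1 {n : ℕ} (G' : GridDiagram (n + 1)) (i : Fin n)
    (x : Equiv.Perm (Fin (n + 1))) (a b : Fin (n + 1)) : Rng (n + 1) :=
  (∏ k : Fin (n + 1), if k ≠ i.castSucc ∧ rectO G' x a b k then Vv k else 1) *
    vv (n + 1) ^ intCount x a b

/-- The value of `𝓗^N_{X₂,big}` on a grid state: it counts rectangles whose only `X`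
marking is `X₂` (the `X` marking in column `i` of the stabilized diagram), ending at a
grid state not containing `c`. -/
def HNx {n : ℕ} (G' : GridDiagram (n + 1)) (i r : Fin n)
    (x : Equiv.Perm (Fin (n + 1))) : GCm (n + 1) :=
  ∑ a : Fin (n + 1), ∑ b : Fin (n + 1),
    if a ≠ b ∧ (x * Equiv.swap a b) i.succ ≠ r.succ ∧ rectX G' x a b i.castSucc ∧
        (∀ k, k ≠ i.castSucc → ¬ rectX G' x a b k) then
      rectMon G' x a b • basM (x * Equiv.swap a b) else 0

/-- The map `𝓗^N_{X₂,big} : I → N`. -/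
def HN {n : ℕ} (G' : GridDiagram (n + 1)) (i r : Fin n) :
    GCm (n + 1) →ₗ[Rng (n + 1)] GCm (n + 1) where
  toFun z := ∑ x : Equiv.Perm (Fin (n + 1)), z x • HNx G' i r x
  map_add' a b := by
    simp only [Pi.add_apply, add_smul]; exact Finset.sum_add_distrib
  map_smul' c a := by
    simp only [Pi.smul_apply, smul_eq_mul, RingHom.id_apply, Finset.smul_sum, smul_smul]

/-- The value of `𝓗⁻_{O₁,big}` on a grid state: it counts rectangles containing `O₁`
and no `X` markings, ending at a grid state containing `c`, with coefficient omitting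
the variable of `O₁`. -/
def HOx {n : ℕ} (G' : GridDiagram (n + 1)) (i r : Fin n)
    (x : Equiv.Perm (Fin (n + 1))) : GCm (n + 1) :=
  ∑ a : Fin (n + 1), ∑ b : Fin (n + 1),
    if a ≠ b ∧ (x * Equiv.swap a b) i.succ = r.succ ∧ rectO G' x a b i.castSucc ∧
        (∀ k, ¬ rectX G' x a b k) then
      rectMonNoO1 G' i x a b • basM (x * Equiv.swap a b) else 0

/-- The map `𝓗⁻_{O₁,big} : N → I`. -/
def HO {n : ℕ} (G' : GridDiagram (n + 1)) (i r : Fin n) :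
    GCm (n + 1) →ₗ[Rng (n + 1)] GCm (n + 1) where
  toFun z := ∑ x : Equiv.Perm (Fin (n + 1)), z x • HOx G' i r x
  map_add' a b := by
    simp only [Pi.add_apply, add_smul]; exact Finset.sum_add_distrib
  map_smul' c a := by
    simp only [Pi.smul_apply, smul_eq_mul, RingHom.id_apply, Finset.smul_sum, smul_smul]

end Grid


namespace Grid

section Aux

variable {n : ℕ}

/-- Two complementary cyclic intervals cover everything. -/
lemma inCyc_total {p q t : ℕ} (h : p ≠ q) : inCyc p q t ∨ inCyc q p t := by
  unfold inCyc; omega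

lemma val_ne_of_ne {m : ℕ} {a b : Fin m} (h : a ≠ b) : a.1 ≠ b.1 :=
  fun hv => h (Fin.ext hv)

/-- Column `a` itself lies in the column interval `[a, i+1)` when `a ≠ i+1`. -/
lemma col_self {a : Fin (n + 1)} {i : Fin n} (ha : a ≠ i.succ) :
    inCyc a.1 i.succ.1 a.1 := by
  have ha' : a.1 ≠ i.1 + 1 := by simpa [Fin.ext_iff] using ha
  simp only [Fin.val_succ]
  unfold inCyc; omega

/-- Column `i` lies in the column interval `[a, i+1)` when `a ≠ i+1`. -/
lemma col_ic {a : Fin (n + 1)} {i : Fin n} (ha : a ≠ i.succ) :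
    inCyc a.1 i.succ.1 i.castSucc.1 := by
  have ha' : a.1 ≠ i.1 + 1 := by simpa [Fin.ext_iff] using ha
  simp only [Fin.val_succ, Fin.coe_castSucc]
  unfold inCyc; omega

/-- The column interval `[i, i+1)` consists of column `i` alone. -/
lemma col_only {k : Fin (n + 1)} {i : Fin n}
    (h : inCyc i.castSucc.1 i.succ.1 k.1) : k = i.castSucc := by
  simp only [Fin.val_succ, Fin.coe_castSucc] at h
  unfold inCyc at h
  refine Fin.ext ?_
  simp only [Fin.coe_castSucc]
  omega

/-- The column interval `[i+1, b)` does not contain column `i` unless `b = i+1`. -/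
lemma col_from_succ {b : Fin (n + 1)} {i : Fin n}
    (h : inCyc i.succ.1 b.1 i.castSucc.1) : b = i.succ := by
  simp only [Fin.val_succ, Fin.coe_castSucc] at h
  unfold inCyc at h
  refine Fin.ext ?_
  simp only [Fin.val_succ]
  omega

variable (G' : GridDiagram (n + 1)) (i r : Fin n) (x : Equiv.Perm (Fin (n + 1)))

lemma HN_bas : HN G' i r (basM x) = HNx G' i r x := by
  classical
  show (∑ z : Equiv.Perm (Fin (n + 1)), basM x z • HNx G' i r z) = _
  rw [Finset.sum_eq_single x]
  · simp [basM]
  · intro z _ hz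
    have : basM x z = 0 := by simp [basM, hz]
    rw [this, zero_smul]
  · simp

lemma HO_bas : HO G' i r (basM x) = HOx G' i r x := by
  classical
  show (∑ z : Equiv.Perm (Fin (n + 1)), basM x z • HOx G' i r z) = _
  rw [Finset.sum_eq_single x]
  · simp [basM]
  · intro z _ hz
    have : basM x z = 0 := by simp [basM, hz]
    rw [this, zero_smul]
  · simp

variable {x}

/-- Computation of `𝓗^N` on a basis element of `I`. -/
lemma HNx_eq (hx : x i.succ = r.succ) (hX2 : G'.σX i.castSucc = r.castSucc) :
    HNx G' i r x = ∑ a : Fin (n + 1),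
      if a ≠ i.succ ∧ (∀ k, k ≠ i.castSucc → ¬ rectX G' x a i.succ k) then
        rectMon G' x a i.succ • basM (x * Equiv.swap a i.succ) else 0 := by
  unfold HNx
  refine Finset.sum_congr rfl fun a _ => ?_
  rw [Finset.sum_eq_single i.succ]
  · refine if_congr ?_ rfl rfl
    constructor
    · rintro ⟨hab, -, -, hno⟩
      exact ⟨hab, hno⟩
    · rintro ⟨ha, hno⟩
      have hxa : x a ≠ r.succ := fun h => ha (x.injective (h.trans hx.symm))
      have hxa' : (x a).1 ≠ r.1 + 1 := by simpa [Fin.ext_iff] using hxa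
      refine ⟨ha, ?_, ⟨col_ic ha, ?_⟩, hno⟩
      · rw [Equiv.Perm.mul_apply, Equiv.swap_apply_right]
        exact hxa
      · rw [hX2, hx]
        simp only [Fin.val_succ, Fin.coe_castSucc]
        unfold inCyc; omega
  · intro b _ hb
    rw [if_neg]
    rintro ⟨hab, hy, hXc, -⟩
    have hmove : Equiv.swap a b i.succ ≠ i.succ := by
      intro h
      rw [Equiv.Perm.mul_apply, h, hx] at hy
      exact hy rfl
    have := Equiv.swap_apply_ne_self_iff.mp hmove
    rcases this.2 with h | h
    · subst h
      exact hb (col_from_succ hXc.1)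
    · exact hb h.symm
  · simp

/-- Computation of `𝓗⁻` on a basis element reached from `I` by `𝓗^N`. -/
lemma HOx_eq (hx : x i.succ = r.succ) (hO1 : G'.σO i.castSucc = r.succ)
    {a : Fin (n + 1)} (ha : a ≠ i.succ) :
    HOx G' i r (x * Equiv.swap a i.succ) =
      if (∀ k, ¬ rectX G' (x * Equiv.swap a i.succ) a i.succ k) then
        rectMonNoO1 G' i (x * Equiv.swap a i.succ) a i.succ • basM x else 0 := by
  classical
  set y := x * Equiv.swap a i.succ with hy
  have hya : y a = r.succ := by
    rw [hy, Equiv.Perm.mul_apply, Equiv.swap_apply_left, hx]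
  have hyi : y i.succ = x a := by
    rw [hy, Equiv.Perm.mul_apply, Equiv.swap_apply_right]
  have hxa : x a ≠ r.succ := fun h => ha (x.injective (h.trans hx.symm))
  have hxa' : (x a).1 ≠ r.1 + 1 := by simpa [Fin.ext_iff] using hxa
  unfold HOx
  rw [Finset.sum_eq_single a]
  · rw [Finset.sum_eq_single i.succ]
    · have hback : y * Equiv.swap a i.succ = x := by
        rw [hy, mul_assoc, Equiv.swap_mul_self, mul_one]
      rw [hback]
      refine if_congr ?_ rfl rfl
      constructor
      · rintro ⟨-, -, -, hno⟩; exact hno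
      · intro hno
        refine ⟨ha, ?_, ⟨col_ic ha, ?_⟩, hno⟩
        · exact hx
        · rw [hO1, hya, hyi]
          simp only [Fin.val_succ, Fin.coe_castSucc]
          unfold inCyc; omega
    · intro b _ hb
      rw [if_neg]
      rintro ⟨hab, hz, -, -⟩
      rw [Equiv.Perm.mul_apply] at hz
      have hswap : Equiv.swap a b i.succ = i.succ :=
        Equiv.swap_apply_of_ne_of_ne (Ne.symm ha) (Ne.symm hb)
      rw [hswap, hyi] at hz
      exact hxa hz
    · simp
  · intro a' _ ha'
    refine Finset.sum_eq_zero fun b _ => ?_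
    rw [if_neg]
    rintro ⟨hab, hz, hO, -⟩
    rw [Equiv.Perm.mul_apply] at hz
    have hmove : Equiv.swap a' b i.succ = a := y.injective (hz.trans hya.symm)
    by_cases hia : i.succ = a'
    · subst hia
      exact hab (col_from_succ hO.1).symm
    · by_cases hib : i.succ = b
      · rw [← hib, Equiv.swap_apply_right] at hmove
        exact ha' hmove
      · rw [Equiv.swap_apply_of_ne_of_ne hia hib] at hmove
        exact ha hmove.symm
  · simp

/-- The key cancellation: for `a ∉ {i, i+1}` the two emptiness conditions are
incompatible, since the `X` marking of column `a` lies in one of the two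
complementary rectangles. -/
lemma cancel (hx : x i.succ = r.succ) {a : Fin (n + 1)} (ha : a ≠ i.succ)
    (hac : a ≠ i.castSucc)
    (h1 : ∀ k, k ≠ i.castSucc → ¬ rectX G' x a i.succ k) :
    ¬ (∀ k, ¬ rectX G' (x * Equiv.swap a i.succ) a i.succ k) := by
  intro h2
  have hxa : x a ≠ r.succ := fun h => ha (x.injective (h.trans hx.symm))
  have hxa' : (x a).1 ≠ r.1 + 1 := by simpa [Fin.ext_iff] using hxa
  have hcol : inCyc a.1 i.succ.1 a.1 := col_self ha
  have hya : (x * Equiv.swap a i.succ) a = r.succ := by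
    rw [Equiv.Perm.mul_apply, Equiv.swap_apply_left, hx]
  have hyi : (x * Equiv.swap a i.succ) i.succ = x a := by
    rw [Equiv.Perm.mul_apply, Equiv.swap_apply_right]
  have htot : inCyc (x a).1 (r.1 + 1) (G'.σX a).1 ∨
      inCyc (r.1 + 1) (x a).1 (G'.σX a).1 := inCyc_total (by omega)
  rcases htot with h | h
  · refine h1 a hac ⟨hcol, ?_⟩
    rw [hx]; simpa using h
  · refine h2 a ⟨hcol, ?_⟩
    rw [hya, hyi]; simpa using h

/-- The surviving term: both emptiness conditions hold for `a = i`. -/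
lemma cond1_ic : ∀ k, k ≠ i.castSucc → ¬ rectX G' x i.castSucc i.succ k :=
  fun k hk h => hk (col_only h.1)

lemma cond2_ic (hx : x i.succ = r.succ) (hX2 : G'.σX i.castSucc = r.castSucc) :
    ∀ k, ¬ rectX G' (x * Equiv.swap i.castSucc i.succ) i.castSucc i.succ k := by
  intro k hk
  have hic : (i.castSucc : Fin (n + 1)) ≠ i.succ := by
    simp [Fin.ext_iff]
  obtain rfl : k = i.castSucc := col_only hk.1
  have hrow := hk.2
  have hxa : x i.castSucc ≠ r.succ := fun h => hic (x.injective (h.trans hx.symm))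
  have hxa' : (x i.castSucc).1 ≠ r.1 + 1 := by simpa [Fin.ext_iff] using hxa
  rw [Equiv.Perm.mul_apply, Equiv.Perm.mul_apply, Equiv.swap_apply_left,
    Equiv.swap_apply_right, hx, hX2] at hrow
  simp only [Fin.val_succ, Fin.coe_castSucc] at hrow
  unfold inCyc at hrow; omega

lemma intCount_ic (z : Equiv.Perm (Fin (n + 1))) :
    intCount z i.castSucc i.succ = 0 := by
  unfold intCount
  rw [Finset.card_eq_zero, Finset.filter_eq_empty_iff]
  rintro k - ⟨hk, hcol, -⟩
  exact hk (col_only hcol)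

lemma rectMon_ic (hx : x i.succ = r.succ) (hO1 : G'.σO i.castSucc = r.succ) :
    rectMon G' x i.castSucc i.succ = 1 := by
  have hic : (i.castSucc : Fin (n + 1)) ≠ i.succ := by
    simp [Fin.ext_iff]
  have hxa : x i.castSucc ≠ r.succ := fun h => hic (x.injective (h.trans hx.symm))
  have hxa' : (x i.castSucc).1 ≠ r.1 + 1 := by simpa [Fin.ext_iff] using hxa
  unfold rectMon
  rw [intCount_ic, pow_zero, mul_one]
  refine Finset.prod_eq_one fun k _ => ?_
  rw [if_neg]
  rintro ⟨hcol, hrow⟩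
  obtain rfl : k = i.castSucc := col_only hcol
  rw [hO1, hx] at hrow
  simp only [Fin.val_succ, Fin.coe_castSucc] at hrow
  unfold inCyc at hrow; omega

lemma rectMonNoO1_ic (z : Equiv.Perm (Fin (n + 1))) :
    rectMonNoO1 G' i z i.castSucc i.succ = 1 := by
  unfold rectMonNoO1
  rw [intCount_ic, pow_zero, mul_one]
  refine Finset.prod_eq_one fun k _ => ?_
  rw [if_neg]
  rintro ⟨hk, hcol, -⟩
  exact hk (col_only hcol)

end Aux

end Grid

theorem statement19 {n : ℕ} (G : GridDiagram n) (G' : GridDiagram (n + 1)) (i : Fin n)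
    (hstab : StabXSEat G G' i) :
    ∀ x : Equiv.Perm (Fin (n + 1)), x i.succ = (G.σX i).succ →
      HO G' i (G.σX i) (HN G' i (G.σX i) (basM x)) = basM x := by
  obtain ⟨r, hr, hX2, hXs, hO1, -⟩ := hstab
  intro x hx
  rw [← hr] at hx ⊢
  rw [HN_bas, HNx_eq G' i r hx hX2, map_sum]
  have step : ∀ a : Fin (n + 1),
      HO G' i r (if a ≠ i.succ ∧ (∀ k, k ≠ i.castSucc → ¬ rectX G' x a i.succ k) then
          rectMon G' x a i.succ • basM (x * Equiv.swap a i.succ) else 0)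
        = if a = i.castSucc then basM x else 0 := by
    intro a
    by_cases ha : a = i.castSucc
    · subst ha
      have hic : (i.castSucc : Fin (n + 1)) ≠ i.succ := by simp [Fin.ext_iff]
      rw [if_pos ⟨hic, cond1_ic G' i⟩, if_pos rfl, map_smul, HO_bas,
        HOx_eq G' i r hx hO1 hic, if_pos (cond2_ic G' i r hx hX2),
        rectMon_ic G' i r hx hO1, rectMonNoO1_ic, one_smul, one_smul]
    · rw [if_neg ha]
      by_cases his : a = i.succ
      · rw [if_neg (by simp [his]), map_zero]
      · by_cases h1 : ∀ k, k ≠ i.castSucc → ¬ rectX G' x a i.succ k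
        · rw [if_pos ⟨his, h1⟩, map_smul, HO_bas, HOx_eq G' i r hx hO1 his,
            if_neg (cancel G' i r hx his ha h1), smul_zero]
        · rw [if_neg (by tauto), map_zero]
  rw [Finset.sum_congr rfl fun a _ => step a, Finset.sum_ite_eq' Finset.univ i.castSucc
    (fun _ => basM x), if_pos (Finset.mem_univ _)]
end
end
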